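/- arXiv:2510.05793 — 5 statements merged into one kernel-verified Lean document; each statement's English description precedes it below -/
import Mathlib

section
/- If f is analytic on the right half-plane C_0 = {s : Re s > 0} and C = sup over σ>0 and T≥1 of (1/(2T))∫_{-T}^{T} |f(σ+it)|^p dt is finite for some 1 ≤ p < ∞, then for every s = σ+it with σ > 0 one has |f(s)|^p ≤ 2C(1+|s|)/σ. -/
open MeasureTheory Complex Set Metric intervalIntegral

lemma mv_norm {c : ℂ} {R : ℝ} (hR : 0 < R) {f : ℂ → ℂ}
    (h : DiffContOnCl ℂ f (Metric.ball c R)) :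
    ‖f c‖ ≤ (2 * Real.pi)⁻¹ * ∫ θ in (0:ℝ)..(2*Real.pi), ‖f (circleMap c R θ)‖ := by
  have h1 := h.circleIntegral_sub_inv_smul (Metric.mem_ball_self hR)
  rw [circleIntegral] at h1
  have h2 : ∀ θ : ℝ, deriv (circleMap c R) θ • (circleMap c R θ - c)⁻¹ • f (circleMap c R θ)
      = I * f (circleMap c R θ) := by
    intro θ
    rw [deriv_circleMap, circleMap_sub_center]
    have hne : circleMap 0 R θ ≠ 0 := by
      simp [circleMap_eq_center_iff, hR.ne']
    field_simp
    rw [smul_eq_mul, smul_eq_mul, one_div, mul_comm (circleMap 0 R θ) I, mul_assoc, ← mul_assoc (circleMap 0 R θ), mul_inv_cancel₀ hne, one_mul]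
  simp only [h2] at h1
  rw [intervalIntegral.integral_const_mul] at h1
  have h3 : (∫ θ in (0:ℝ)..(2*Real.pi), f (circleMap c R θ)) = (2 * Real.pi) * f c := by
    have hI : (I : ℂ) ≠ 0 := I_ne_zero
    field_simp at h1 ⊢
    apply mul_left_cancel₀ hI
    rw [h1]; push_cast; ring
  have h4 : ‖(2 * Real.pi : ℝ) * f c‖ ≤ ∫ θ in (0:ℝ)..(2*Real.pi), ‖f (circleMap c R θ)‖ := by
    push_cast
    rw [← h3]
    exact intervalIntegral.norm_integral_le_integral_norm (by positivity)
  rw [norm_mul] at h4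
  have hpi : (0:ℝ) < 2 * Real.pi := by positivity
  rw [Complex.norm_real, Real.norm_eq_abs, abs_of_pos hpi] at h4
  calc ‖f c‖ = (2*Real.pi)⁻¹ * (2 * Real.pi * ‖f c‖) := by field_simp
    _ ≤ _ := by
        apply mul_le_mul_of_nonneg_left h4 (by positivity)

lemma jensen_rpow {p : ℝ} (hp : 1 ≤ p) {g : ℝ → ℝ} (hg : ∀ x, 0 ≤ g x)
    (h1 : IntegrableOn g (Set.Ioc 0 (2*Real.pi)))
    (h2 : IntegrableOn (fun x => g x ^ p) (Set.Ioc 0 (2*Real.pi))) :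
    ((2*Real.pi)⁻¹ * ∫ θ in (0:ℝ)..(2*Real.pi), g θ) ^ p
      ≤ (2*Real.pi)⁻¹ * ∫ θ in (0:ℝ)..(2*Real.pi), g θ ^ p := by
  have hpi : (0:ℝ) < 2 * Real.pi := by positivity
  set μ : Measure ℝ := volume.restrict (Set.Ioc 0 (2*Real.pi)) with hμ
  haveI : Fact ((volume : Measure ℝ) (Set.Ioc 0 (2*Real.pi)) < ⊤) := ⟨measure_Ioc_lt_top⟩
  haveI : IsFiniteMeasure μ := Restrict.isFiniteMeasure _
  haveI : NeZero μ := by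
    constructor
    rw [hμ, Ne, Measure.restrict_eq_zero]
    simp [Real.volume_Ioc, hpi.le, ENNReal.ofReal_eq_zero, not_le, hpi, Real.pi_pos]
  have huniv : μ.real Set.univ = 2 * Real.pi := by
    show (μ Set.univ).toReal = _
    rw [hμ, Measure.restrict_apply_univ, Real.volume_Ioc]
    simp [ENNReal.toReal_ofReal hpi.le, Real.pi_pos.le]
  have key := (convexOn_rpow hp).map_average_le
    (f := g) (μ := μ)
    (fun x hx => (Real.continuousAt_rpow_const x p (Or.inr (by linarith))).continuousWithinAt)
    isClosed_Ici (Filter.Eventually.of_forall fun x => hg x) h1 h2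
  rw [average_eq, average_eq, huniv] at key
  rw [intervalIntegral.integral_of_le hpi.le, intervalIntegral.integral_of_le hpi.le]
  simpa using key

lemma mv_rpow {c : ℂ} {R : ℝ} (hR : 0 < R) {p : ℝ} (hp : 1 ≤ p) {f : ℂ → ℂ}
    (h : DiffContOnCl ℂ f (Metric.ball c R)) :
    2 * Real.pi * ‖f c‖ ^ p
      ≤ ∫ θ in (0:ℝ)..(2*Real.pi), ‖f (circleMap c R θ)‖ ^ p := by
  have hpi : (0:ℝ) < 2 * Real.pi := by positivity
  have hc1 : ContinuousOn (fun θ : ℝ => f (circleMap c R θ)) Set.univ :=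
    h.continuousOn_ball.comp (continuous_circleMap c R).continuousOn
      (fun θ _ => circleMap_mem_closedBall c hR.le θ)
  have hc2 : Continuous (fun θ : ℝ => ‖f (circleMap c R θ)‖) := by
    rw [← continuousOn_univ]
    exact continuous_norm.comp_continuousOn hc1
  have hc3 : Continuous (fun θ => ‖f (circleMap c R θ)‖ ^ p) :=
    hc2.rpow_const (fun x => Or.inr (le_trans zero_le_one hp))
  have key := jensen_rpow hp (fun x => norm_nonneg _)
    hc2.integrableOn_Ioc hc3.integrableOn_Ioc
  have mv := mv_norm hR h
  have h5 : ‖f c‖ ^ p ≤ ((2*Real.pi)⁻¹ * ∫ θ in (0:ℝ)..(2*Real.pi), ‖f (circleMap c R θ)‖) ^ p :=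
    Real.rpow_le_rpow (norm_nonneg _) mv (by linarith)
  have h6 := h5.trans key
  calc 2 * Real.pi * ‖f c‖ ^ p
      ≤ 2 * Real.pi * ((2*Real.pi)⁻¹ * ∫ θ in (0:ℝ)..(2*Real.pi), ‖f (circleMap c R θ)‖ ^ p) :=
        mul_le_mul_of_nonneg_left h6 hpi.le
    _ = _ := by field_simp

set_option maxHeartbeats 1000000 in
theorem stmt_0 (p C : ℝ) (hp : 1 ≤ p) (f : ℂ → ℂ)
    (hf : DifferentiableOn ℂ f {s : ℂ | 0 < s.re})
    (hC : ∀ σ : ℝ, 0 < σ → ∀ T : ℝ, 1 ≤ T →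
      (1 / (2 * T)) * ∫ t in (-T)..T, ‖f (σ + t * I)‖ ^ p ≤ C) :
    ∀ s : ℂ, 0 < s.re →
      ‖f s‖ ^ p ≤ 2 * C * (1 + ‖s‖) / s.re := by
  have hπ : (0:ℝ) < Real.pi := Real.pi_pos
  have hπ3 : (3.14:ℝ) ≤ Real.pi := by
    have := Real.pi_gt_d6; linarith
  -- C is nonnegative
  have hC0 : 0 ≤ C := by
    refine le_trans ?_ (hC 1 one_pos 1 le_rfl)
    apply mul_nonneg (by norm_num)
    apply intervalIntegral.integral_nonneg (by norm_num)
    intro t _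
    positivity
  intro s hs
  set σ : ℝ := s.re with hσdef
  set ρ : ℝ := (24/25) * σ with hρdef
  have hρ : 0 < ρ := by positivity
  have hρσ : ρ < σ := by rw [hρdef]; nlinarith
  set T : ℝ := max 1 (|s.im| + σ) with hTdef
  have hT1 : 1 ≤ T := le_max_left _ _
  have hT0 : 0 < T := lt_of_lt_of_le one_pos hT1
  set g : ℂ → ℝ := fun z => ‖f z‖ ^ p with hgdef
  have hg0 : ∀ z, 0 ≤ g z := fun z => by positivity
  have hopen : IsOpen {z : ℂ | 0 < z.re} := isOpen_lt continuous_const Complex.continuous_re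
  have hgc : ContinuousOn g {z : ℂ | 0 < z.re} := by
    apply ContinuousOn.rpow_const
    · exact continuous_norm.comp_continuousOn hf.continuousOn
    · intro x _; exact Or.inr (le_trans zero_le_one hp)
  have hball : Metric.closedBall s ρ ⊆ {z : ℂ | 0 < z.re} := by
    intro z hz
    rw [Metric.mem_closedBall, Complex.dist_eq] at hz
    have h1 : |(z - s).re| ≤ ‖z - s‖ := Complex.abs_re_le_norm _
    rw [Complex.sub_re] at h1
    have := abs_le.mp (h1.trans hz)
    simp only [Set.mem_setOf_eq]
    linarith [this.1]
  -- circle lower bound, on (-π, π)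
  have hcirc : ∀ r ∈ Set.Ioc (0:ℝ) ρ,
      2 * Real.pi * g s ≤ ∫ θ in (-Real.pi)..Real.pi, g (circleMap s r θ) := by
    intro r hr
    have hsub : Metric.closedBall s r ⊆ {z : ℂ | 0 < z.re} :=
      (Metric.closedBall_subset_closedBall hr.2).trans hball
    have hdc : DiffContOnCl ℂ f (Metric.ball s r) := by
      constructor
      · exact hf.mono ((Metric.ball_subset_closedBall).trans hsub)
      · exact hf.continuousOn.mono ((closure_ball_subset_closedBall).trans hsub)
    have key := mv_rpow hr.1 hp hdc
    have hper : Function.Periodic (fun θ => g (circleMap s r θ)) (2*Real.pi) := by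
      intro θ
      simp only [hgdef]
      rw [periodic_circleMap s r θ]
    have heq := hper.intervalIntegral_add_eq (-Real.pi) 0
    rw [zero_add] at heq
    rw [show -Real.pi + 2*Real.pi = Real.pi by ring] at heq
    rw [heq]
    exact key
  -- F, integrability
  set F : ℝ × ℝ → ℝ := fun q => q.1 * g (s + Complex.polarCoord.symm q) with hFdef
  have hsymm : ∀ r θ : ℝ, s + Complex.polarCoord.symm (r, θ) = circleMap s r θ := by
    intro r θ
    rw [Complex.polarCoord_symm_apply]
    simp only [circleMap, Complex.exp_mul_I]
    push_cast
    ring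
  have hsymm_cont : Continuous fun q : ℝ × ℝ => s + Complex.polarCoord.symm q := by
    simp only [Complex.polarCoord_symm_apply]
    fun_prop
  have hmapsto : ∀ q : ℝ × ℝ, |q.1| ≤ ρ → s + Complex.polarCoord.symm q ∈ {z : ℂ | 0 < z.re} := by
    intro q hq
    apply hball
    rw [Metric.mem_closedBall, Complex.dist_eq, add_sub_cancel_left, Complex.norm_polarCoord_symm]
    exact hq
  have hFK : ContinuousOn F (Set.Icc (-ρ) ρ ×ˢ Set.Icc (-Real.pi) Real.pi) := by
    apply ContinuousOn.mul (continuous_fst.continuousOn)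
    apply hgc.comp hsymm_cont.continuousOn
    intro q hq
    exact hmapsto q (abs_le.mpr ⟨hq.1.1, hq.1.2⟩)
  have hFint : IntegrableOn F (Set.Ioo 0 ρ ×ˢ Set.Ioo (-Real.pi) Real.pi) := by
    apply (hFK.integrableOn_compact (isCompact_Icc.prod isCompact_Icc)).mono_set
    apply Set.prod_mono
    · exact Set.Ioo_subset_Icc_self.trans (Set.Icc_subset_Icc (by linarith) le_rfl)
    · exact Set.Ioo_subset_Icc_self
  have hFint' : Integrable F ((volume.restrict (Set.Ioo 0 ρ)).prod
      (volume.restrict (Set.Ioo (-Real.pi) Real.pi))) := by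
    rw [Measure.prod_restrict]
    rw [← Measure.volume_eq_prod]
    exact hFint
  -- lower bound for double integral
  have hlow : Real.pi * ρ^2 * g s ≤ ∫ q in Set.Ioo 0 ρ ×ˢ Set.Ioo (-Real.pi) Real.pi, F q := by
    have hfub : (∫ q in Set.Ioo 0 ρ ×ˢ Set.Ioo (-Real.pi) Real.pi, F q)
        = ∫ r in Set.Ioo 0 ρ, ∫ θ in Set.Ioo (-Real.pi) Real.pi, F (r, θ) := by
      rw [Measure.volume_eq_prod]
      exact setIntegral_prod F (by rw [← Measure.volume_eq_prod]; exact hFint)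
    rw [hfub]
    have hinner : ∀ r ∈ Set.Ioo (0:ℝ) ρ,
        r * (2 * Real.pi * g s) ≤ ∫ θ in Set.Ioo (-Real.pi) Real.pi, F (r, θ) := by
      intro r hr
      have : (∫ θ in Set.Ioo (-Real.pi) Real.pi, F (r, θ))
          = r * ∫ θ in Set.Ioo (-Real.pi) Real.pi, g (circleMap s r θ) := by
        simp only [hFdef, hsymm]
        exact MeasureTheory.integral_const_mul r _
      rw [this]
      apply mul_le_mul_of_nonneg_left _ hr.1.le
      rw [← integral_Ioc_eq_integral_Ioo, ← intervalIntegral.integral_of_le (by linarith)]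
      exact hcirc r ⟨hr.1, hr.2.le⟩
    have hmono : (∫ r in Set.Ioo 0 ρ, r * (2 * Real.pi * g s))
        ≤ ∫ r in Set.Ioo 0 ρ, ∫ θ in Set.Ioo (-Real.pi) Real.pi, F (r, θ) := by
      apply setIntegral_mono_on
      · exact ((continuous_id.mul continuous_const).integrableOn_Ioc).mono_set
          Set.Ioo_subset_Ioc_self
      · exact hFint'.integral_prod_left
      · exact measurableSet_Ioo
      · exact hinner
    refine le_trans (le_of_eq ?_) hmono
    have : (∫ r in Set.Ioo 0 ρ, r * (2 * Real.pi * g s))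
        = (∫ r in Set.Ioo 0 ρ, r) * (2 * Real.pi * g s) := integral_mul_const _ _
    rw [this, ← integral_Ioc_eq_integral_Ioo, ← intervalIntegral.integral_of_le hρ.le,
      integral_id]
    ring
  -- polar change of variables
  have hpolar : (∫ q in Set.Ioo 0 ρ ×ˢ Set.Ioo (-Real.pi) Real.pi, F q)
      = ∫ z in Metric.ball s ρ, g z := by
    have h1 := Complex.integral_comp_polarCoord_symm
      (fun z => Set.indicator (Metric.ball s ρ) g (s + z))
    rw [polarCoord_target] at h1
    have h2 : (∫ z : ℂ, Set.indicator (Metric.ball s ρ) g (s + z))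
        = ∫ z in Metric.ball s ρ, g z := by
      rw [MeasureTheory.integral_add_left_eq_self, MeasureTheory.integral_indicator Metric.isOpen_ball.measurableSet]
    rw [← h2, ← h1]
    have h3 : ∀ q ∈ Set.Ioi (0:ℝ) ×ˢ Set.Ioo (-Real.pi) Real.pi,
        q.1 • Set.indicator (Metric.ball s ρ) g (s + Complex.polarCoord.symm q)
        = Set.indicator (Set.Ioo 0 ρ ×ˢ Set.Ioo (-Real.pi) Real.pi) F q := by
      intro q hq
      have hq1 : 0 < q.1 := hq.1
      have habs : ‖Complex.polarCoord.symm q‖ = q.1 := by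
        rw [Complex.norm_polarCoord_symm, abs_of_pos hq1]
      by_cases hcase : q.1 < ρ
      · have hmem : s + Complex.polarCoord.symm q ∈ Metric.ball s ρ := by
          rw [Metric.mem_ball, Complex.dist_eq, add_sub_cancel_left, habs]; exact hcase
        have hmem2 : q ∈ Set.Ioo 0 ρ ×ˢ Set.Ioo (-Real.pi) Real.pi := ⟨⟨hq1, hcase⟩, hq.2⟩
        rw [Set.indicator_of_mem hmem, Set.indicator_of_mem hmem2]
        simp [hFdef, smul_eq_mul]
      · have hmem : s + Complex.polarCoord.symm q ∉ Metric.ball s ρ := by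
          rw [Metric.mem_ball, Complex.dist_eq, add_sub_cancel_left, habs]; exact hcase
        have hmem2 : q ∉ Set.Ioo 0 ρ ×ˢ Set.Ioo (-Real.pi) Real.pi := by
          intro hmem2; exact hcase hmem2.1.2
        rw [Set.indicator_of_notMem hmem, Set.indicator_of_notMem hmem2, smul_zero]
    rw [setIntegral_congr_fun (measurableSet_Ioi.prod measurableSet_Ioo) h3]
    rw [setIntegral_indicator (measurableSet_Ioo.prod measurableSet_Ioo)]
    rw [Set.inter_eq_right.mpr (Set.prod_mono_left Set.Ioo_subset_Ioi_self)]
  -- rectangle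
  set A : Set ℝ := Set.Ioo (σ - ρ) (σ + ρ) with hAdef
  set B : Set ℝ := Set.Ioo (s.im - ρ) (s.im + ρ) with hBdef
  set gq : ℝ × ℝ → ℝ := fun q => g (q.1 + q.2 * I) with hgqdef
  have hgqK : ContinuousOn gq (Set.Icc (σ - ρ) (σ + ρ) ×ˢ Set.Icc (s.im - ρ) (s.im + ρ)) := by
    apply hgc.comp
    · fun_prop
    · intro q hq
      simp only [Set.mem_setOf_eq, Complex.add_re, Complex.ofReal_re, Complex.mul_re,
        Complex.I_re, Complex.I_im, Complex.ofReal_im]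
      have := hq.1.1
      nlinarith [hq.1.1]
  have hgqint : IntegrableOn gq (A ×ˢ B) := by
    apply (hgqK.integrableOn_compact (isCompact_Icc.prod isCompact_Icc)).mono_set
    exact Set.prod_mono Set.Ioo_subset_Icc_self Set.Ioo_subset_Icc_self
  have hgqint' : Integrable gq ((volume.restrict A).prod (volume.restrict B)) := by
    rw [Measure.prod_restrict, ← Measure.volume_eq_prod]
    exact hgqint
  set U : Set ℂ := Complex.measurableEquivRealProd ⁻¹' (A ×ˢ B) with hUdef
  have hU : (∫ z in U, g z) = ∫ q in A ×ˢ B, gq q := by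
    have := Complex.volume_preserving_equiv_real_prod.setIntegral_preimage_emb
      Complex.measurableEquivRealProd.measurableEmbedding gq (A ×ˢ B)
    rw [← this]
    apply setIntegral_congr_fun
    · exact Complex.measurableEquivRealProd.measurableSet_preimage.mpr
        (measurableSet_Ioo.prod measurableSet_Ioo)
    · intro z _
      simp only [hgqdef, Complex.measurableEquivRealProd_apply]
      rw [Complex.re_add_im]
  have hUint : IntegrableOn g U := by
    rw [hUdef]
    rw [← MeasurePreserving.integrableOn_comp_preimage
      Complex.volume_preserving_equiv_real_prod
      Complex.measurableEquivRealProd.measurableEmbedding] at hgqint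
    apply hgqint.congr_fun _ (Complex.measurableEquivRealProd.measurableSet_preimage.mpr
        (measurableSet_Ioo.prod measurableSet_Ioo))
    intro z _
    simp only [hgqdef, Function.comp_apply, Complex.measurableEquivRealProd_apply]
    rw [Complex.re_add_im]
  have hballU : Metric.ball s ρ ⊆ U := by
    intro z hz
    rw [Metric.mem_ball, Complex.dist_eq] at hz
    have h1 : |(z - s).re| ≤ ‖z - s‖ := Complex.abs_re_le_norm _
    have h2 : |(z - s).im| ≤ ‖z - s‖ := Complex.abs_im_le_norm _
    rw [Complex.sub_re] at h1
    rw [Complex.sub_im] at h2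
    have h1' := abs_lt.mp (lt_of_le_of_lt h1 hz)
    have h2' := abs_lt.mp (lt_of_le_of_lt h2 hz)
    simp only [hUdef, Set.mem_preimage, Complex.measurableEquivRealProd_apply,
      Set.mem_prod, Set.mem_Ioo, hAdef, hBdef]
    refine ⟨⟨by linarith [h1'.1], by linarith [h1'.2]⟩, ⟨by linarith [h2'.1], by linarith [h2'.2]⟩⟩
  have hstep1 : (∫ z in Metric.ball s ρ, g z) ≤ ∫ z in U, g z :=
    setIntegral_mono_set hUint (Filter.Eventually.of_forall hg0)
      (HasSubset.Subset.eventuallyLE hballU)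
  have hfub2 : (∫ q in A ×ˢ B, gq q) = ∫ x in A, ∫ y in B, gq (x, y) := by
    rw [Measure.volume_eq_prod]
    exact setIntegral_prod gq (by rw [← Measure.volume_eq_prod]; exact hgqint)
  have hstripinner : ∀ x ∈ A, (∫ y in B, gq (x, y)) ≤ 2 * T * C := by
    intro x hx
    have hx0 : 0 < x := by
      have := hx.1
      simp only [hAdef, Set.mem_Ioo] at hx
      linarith [hx.1]
    have hcont2 : Continuous fun y : ℝ => gq (x, y) := by
      simp only [hgqdef]
      apply hgc.comp_continuous (by fun_prop)
      intro y
      simp only [Set.mem_setOf_eq, Complex.add_re, Complex.ofReal_re, Complex.mul_re,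
        Complex.I_re, Complex.I_im, Complex.ofReal_im]
      simpa using hx0
    have hint : IntegrableOn (fun y => gq (x, y)) (Set.Ioc (-T) T) :=
      hcont2.integrableOn_Ioc
    have hsubB : B ⊆ Set.Ioc (-T) T := by
      intro y hy
      simp only [hBdef, Set.mem_Ioo] at hy
      have hTa : |s.im| + σ ≤ T := le_max_right _ _
      have := neg_abs_le s.im
      have := le_abs_self s.im
      constructor <;> [linarith [hy.1]; linarith [hy.2]]
    have hmono2 : (∫ y in B, gq (x, y)) ≤ ∫ y in Set.Ioc (-T) T, gq (x, y) :=
      setIntegral_mono_set hint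
        (Filter.Eventually.of_forall fun y => by simp only [hgqdef]; exact hg0 _)
        (HasSubset.Subset.eventuallyLE hsubB)
    have heqI : (∫ y in Set.Ioc (-T) T, gq (x, y)) = ∫ t in (-T)..T, gq (x, t) := by
      rw [intervalIntegral.integral_of_le (by linarith)]
    have hCb := hC x hx0 T hT1
    have h2T : (0:ℝ) < 2 * T := by linarith
    have hfin : (∫ t in (-T)..T, gq (x, t)) ≤ 2 * T * C := by
      have heqf : (∫ t in (-T)..T, gq (x, t))
          = ∫ t in (-T)..T, ‖f (↑x + ↑t * I)‖ ^ p := by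
        simp only [hgqdef, hgdef]
      rw [heqf]
      calc (∫ t in (-T)..T, ‖f (↑x + ↑t * I)‖ ^ p)
          = (2*T) * ((1/(2*T)) * ∫ t in (-T)..T, ‖f (↑x + ↑t * I)‖ ^ p) := by
            rw [← mul_assoc, mul_one_div_cancel h2T.ne', one_mul]
        _ ≤ (2*T) * C := mul_le_mul_of_nonneg_left hCb h2T.le
        _ = 2 * T * C := by ring
    linarith [hmono2, heqI ▸ hmono2, hfin, heqI.symm ▸ hfin]
  have hstripouter : (∫ x in A, ∫ y in B, gq (x, y)) ≤ 2 * ρ * (2 * T * C) := by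
    have h1 : (∫ x in A, ∫ y in B, gq (x, y)) ≤ ∫ _x in A, 2 * T * C := by
      apply setIntegral_mono_on
      · exact hgqint'.integral_prod_left
      · exact integrableOn_const measure_Ioo_lt_top.ne
      · exact measurableSet_Ioo
      · exact hstripinner
    have h2 : (∫ _x in A, (2 * T * C : ℝ)) = 2 * ρ * (2 * T * C) := by
      rw [setIntegral_const, hAdef, Real.volume_real_Ioo_of_le (by linarith), smul_eq_mul]
      rw [show σ + ρ - (σ - ρ) = 2 * ρ by ring]
    linarith
  have key : Real.pi * ρ^2 * g s ≤ 2 * ρ * (2 * T * C) := by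
    calc Real.pi * ρ^2 * g s
        ≤ ∫ q in Set.Ioo 0 ρ ×ˢ Set.Ioo (-Real.pi) Real.pi, F q := hlow
      _ = ∫ z in Metric.ball s ρ, g z := hpolar
      _ ≤ ∫ z in U, g z := hstep1
      _ = ∫ q in A ×ˢ B, gq q := hU
      _ = ∫ x in A, ∫ y in B, gq (x, y) := hfub2
      _ ≤ 2 * ρ * (2 * T * C) := hstripouter
  -- final arithmetic
  set a : ℝ := ‖s‖ with hadef
  have ha0 : 0 ≤ a := norm_nonneg _
  have ha2 : a^2 = σ^2 + s.im^2 := by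
    rw [hadef, hσdef, Complex.sq_norm, Complex.normSq_apply]; ring
  have hTineq : 2 * T ≤ (24/25) * Real.pi * (1 + a) := by
    have h1 : (1:ℝ) ≤ (12/25) * Real.pi * (1 + a) := by nlinarith
    have hsq : (|s.im| + σ)^2 ≤ 2 * a^2 := by
      nlinarith [sq_nonneg (|s.im| - σ), _root_.sq_abs s.im]
    have h2 : |s.im| + σ ≤ (12/25) * Real.pi * (1 + a) := by
      nlinarith [abs_nonneg s.im, hs, sq_nonneg (2*(|s.im| + σ) - 3*a)]
    have : T ≤ (12/25) * Real.pi * (1 + a) := max_le h1 h2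
    linarith
  have k1 : 2 * ρ * (2 * T * C) ≤ 2 * ρ * C * ((24/25) * Real.pi * (1 + a)) := by
    have h2ρC : (0:ℝ) ≤ 2 * ρ * C := by positivity
    nlinarith [mul_le_mul_of_nonneg_left hTineq h2ρC]
  have k2 : Real.pi * ρ^2 * g s ≤ 2 * ρ * C * ((24/25) * Real.pi * (1 + a)) := key.trans k1
  rw [hρdef] at k2
  rw [show (2:ℝ) * C * (1 + ‖s‖) / s.re = 2 * C * (1 + a) / σ from rfl]
  rw [le_div_iff₀ hs]
  nlinarith [k2, mul_pos hπ hs, hg0 s, mul_pos (mul_pos hπ hs) hs]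
end

section
/- Let f be analytic on the right half-plane with C = sup_{σ>0} sup_{T≥1} (1/(2T))∫_{-T}^{T}|f(σ+it)|^p dt < ∞ for some 1 ≤ p < ∞. Then for every T ≥ 1, σ > 0, and z = x+iy with x > 0, the inequality ((1/(2T))∫_{-T}^{T} |f(σ+it+z) - f(σ+it)|^p dt)^{1/p} ≤ 3 C^{1/p} (|z|/σ²)(1+σ+|z|)^{1/p+1} holds. -/
open MeasureTheory Complex Metric Set Real


private lemma rpow_cont {p : ℝ} (hp : 0 ≤ p) : Continuous fun x : ℝ => x ^ p :=
  continuous_iff_continuousAt.2 fun x => Real.continuousAt_rpow_const x p (Or.inr hp)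

private lemma two_pow_ineq {p a b : ℝ} (hp : 1 ≤ p) (ha : 0 ≤ a) (hb : 0 ≤ b) :
    (a + b) ^ p ≤ 2 ^ (p - 1) * (a ^ p + b ^ p) := by
  have h := NNReal.rpow_add_le_mul_rpow_add_rpow a.toNNReal b.toNNReal hp
  have := (NNReal.coe_le_coe).2 h
  push_cast [NNReal.coe_rpow] at this
  rwa [Real.coe_toNNReal a ha, Real.coe_toNNReal b hb] at this

private lemma vert_cont {p : ℝ} (hp : 0 ≤ p) {f : ℂ → ℂ}
    (hfc : ContinuousOn f {s : ℂ | 0 < s.re}) {a : ℝ} (ha : 0 < a) :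
    Continuous fun t : ℝ => ‖f (a + t * I)‖ ^ p := by
  apply (rpow_cont hp).comp
  apply continuous_norm.comp
  apply hfc.comp_continuous (by continuity)
  intro t
  simp [Set.mem_setOf_eq, ha]
private lemma C_nonneg {p C : ℝ} {f : ℂ → ℂ}
    (hC : ∀ σ : ℝ, 0 < σ → ∀ T : ℝ, 1 ≤ T →
      (1 / (2 * T)) * ∫ t in (-T)..T, ‖f (σ + t * I)‖ ^ p ≤ C) : 0 ≤ C := by
  have h := hC 1 one_pos 1 le_rfl
  simp only [Complex.ofReal_one] at h
  have h2 : (0:ℝ) ≤ ∫ t in (-(1:ℝ))..1, ‖f (1 + t * I)‖ ^ p := by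
    apply intervalIntegral.integral_nonneg (by norm_num)
    intro x _; positivity
  nlinarith

private lemma shiftA {p C : ℝ} (hp : 1 ≤ p) {f : ℂ → ℂ}
    (hfc : ContinuousOn f {s : ℂ | 0 < s.re})
    (hC : ∀ σ : ℝ, 0 < σ → ∀ T : ℝ, 1 ≤ T →
      (1 / (2 * T)) * ∫ t in (-T)..T, ‖f (σ + t * I)‖ ^ p ≤ C)
    {a : ℝ} (ha : 0 < a) (v : ℝ) {T : ℝ} (hT : 1 ≤ T) :
    ∫ t in (-T)..T, ‖f (a + (t + v : ℝ) * I)‖ ^ p ≤ 2 * T * ((1 + |v|) * C) := by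
  have hC0 : 0 ≤ C := C_nonneg hC
  set g : ℝ → ℝ := fun u => ‖f (a + u * I)‖ ^ p with hg
  have h1 : ∫ t in (-T)..T, ‖f (a + (t + v : ℝ) * I)‖ ^ p
      = ∫ u in (-T + v)..(T + v), g u := by
    rw [← intervalIntegral.integral_comp_add_right g v]
  rw [h1]
  have hT' : 1 ≤ T + |v| := by linarith [abs_nonneg v]
  have h2 : ∫ u in (-T + v)..(T + v), g u ≤ ∫ u in (-(T + |v|))..(T + |v|), g u := by
    apply intervalIntegral.integral_mono_interval (by linarith [neg_abs_le v])
      (by linarith) (by linarith [le_abs_self v])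
    · filter_upwards with x using by positivity
    · exact ((vert_cont (by linarith) hfc ha).intervalIntegrable _ _)
  have h3 := hC a ha (T + |v|) hT'
  have h4 : (0:ℝ) < 2 * (T + |v|) := by linarith
  have h5 : ∫ u in (-(T + |v|))..(T + |v|), g u ≤ 2 * (T + |v|) * C := by
    rw [div_mul_eq_mul_div, one_mul, div_le_iff₀ h4] at h3
    linarith [h3]
  have h6 : 2 * (T + |v|) * C ≤ 2 * T * ((1 + |v|) * C) := by
    nlinarith [mul_nonneg hC0 (mul_nonneg (abs_nonneg v) (sub_nonneg.2 hT))]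
  linarith
private lemma jensenAux {p : ℝ} (hp : 1 ≤ p) {g : ℝ → ℝ} (hg : Continuous g)
    (hg0 : ∀ x, 0 ≤ g x) :
    (∫ θ in (0:ℝ)..(2*π), g θ) ^ p ≤ (2*π) ^ (p-1) * ∫ θ in (0:ℝ)..(2*π), g θ ^ p := by
  have hπ : (0:ℝ) < 2*π := by positivity
  set μ : Measure ℝ := volume.restrict (Set.Ioc (0:ℝ) (2*π)) with hμ
  have hμuniv : μ Set.univ = ENNReal.ofReal (2*π) := by
    simp [hμ, Real.volume_Ioc]
  haveI : IsFiniteMeasure μ := ⟨by rw [hμuniv]; exact ENNReal.ofReal_lt_top⟩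
  haveI : NeZero μ := ⟨by
    intro h
    rw [h, Measure.coe_zero, Pi.zero_apply] at hμuniv
    exact (ENNReal.ofReal_pos.2 hπ).ne' hμuniv.symm⟩
  have hint : Integrable g μ := (hg.integrableOn_Icc).mono_set Set.Ioc_subset_Icc_self
  have hintp : Integrable (fun x => g x ^ p) μ :=
    (((rpow_cont (by linarith)).comp hg).integrableOn_Icc).mono_set Set.Ioc_subset_Icc_self
  have hj := (convexOn_rpow hp).map_average_le
    ((rpow_cont (by linarith)).continuousOn) isClosed_Ici
    (Filter.Eventually.of_forall fun x => hg0 x) hint hintp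
  rw [average_eq, average_eq, measureReal_def, hμuniv, ENNReal.toReal_ofReal hπ.le] at hj
  have e1 : ∫ θ in (0:ℝ)..(2*π), g θ = ∫ x, g x ∂μ := intervalIntegral.integral_of_le hπ.le
  have e2 : ∫ θ in (0:ℝ)..(2*π), g θ ^ p = ∫ x, g x ^ p ∂μ := intervalIntegral.integral_of_le hπ.le
  rw [e1, e2]
  set A := ∫ x, g x ∂μ with hA
  set B := ∫ x, g x ^ p ∂μ with hB
  simp only [smul_eq_mul] at hj
  -- hj : ((2π)⁻¹ * A) ^ p ≤ (2π)⁻¹ * B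
  have hA0 : 0 ≤ A := integral_nonneg fun x => hg0 x
  have key : ((2*π)⁻¹ * A) ^ p = (2*π)⁻¹ ^ p * A ^ p := Real.mul_rpow (by positivity) hA0
  rw [key] at hj
  have h2 : (2*π) ^ (p-1) = (2*π) ^ p * (2*π)⁻¹ := by
    rw [sub_eq_add_neg, Real.rpow_add hπ, Real.rpow_neg_one]
  have h3 : (2*π) ^ p * (2*π)⁻¹ ^ p = 1 := by
    rw [← Real.mul_rpow hπ.le (by positivity), mul_inv_cancel₀ hπ.ne', Real.one_rpow]
  have hpow : (0:ℝ) < (2*π) ^ p := Real.rpow_pos_of_pos hπ p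
  calc A ^ p = (2*π) ^ p * ((2*π)⁻¹ ^ p * A ^ p) := by rw [← mul_assoc, h3, one_mul]
    _ ≤ (2*π) ^ p * ((2*π)⁻¹ * B) := by
        apply mul_le_mul_of_nonneg_left hj hpow.le
    _ = (2*π) ^ (p-1) * B := by rw [h2]; ring


private lemma cauchyAux {f : ℂ → ℂ} (hf : DifferentiableOn ℂ f {s : ℂ | 0 < s.re})
    {σ : ℝ} (hσ : 0 < σ) {z : ℂ} (hz : 0 < z.re) (hzσ : ‖z‖ < σ) (t : ℝ) :
    ‖f (σ + t * I + z) - f (σ + t * I)‖ ≤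
      (2*π)⁻¹ * (4 * ‖z‖ / σ^2 * ((σ + ‖z‖)/2) *
        ∫ θ in (0:ℝ)..(2*π), ‖f (circleMap (σ + t * I + z/2) ((σ + ‖z‖)/2) θ)‖) := by
  have hz0 : 0 ≤ ‖z‖ := (norm_nonneg z)
  set s : ℂ := σ + t * I with hs
  set r : ℝ := (σ + ‖z‖)/2 with hrdef
  set c : ℂ := s + z/2 with hc
  have hr : 0 < r := by positivity
  have hcre : c.re = σ + z.re/2 := by
    simp [hc, hs, Complex.add_re, Complex.div_ofNat_re]
  -- the closed ball is in the right half-plane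
  have hsub : closedBall c r ⊆ {w : ℂ | 0 < w.re} := by
    intro w hw
    rw [mem_closedBall, Complex.dist_eq] at hw
    have h1 : (c - w).re ≤ ‖c - w‖ := Complex.re_le_norm _
    have h2 : ‖c - w‖ = ‖w - c‖ := by
      rw [← norm_neg, neg_sub]
    have h3 : (c - w).re = c.re - w.re := Complex.sub_re c w
    have h4 : 0 < w.re := by rw [hcre] at h3; linarith
    exact h4
  have hdc : DiffContOnCl ℂ f (ball c r) :=
    DifferentiableOn.diffContOnCl (by rw [closure_ball c hr.ne']; exact hf.mono hsub)
  have habs1 : ‖s + z - c‖ = ‖z‖ / 2 := by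
    have : s + z - c = z / 2 := by rw [hc]; ring
    rw [this, norm_div, Complex.norm_two]
  have habs2 : ‖s - c‖ = ‖z‖ / 2 := by
    have : s - c = -(z / 2) := by rw [hc]; ring
    rw [this, norm_neg, norm_div, Complex.norm_two]
  have mem₁ : s + z ∈ ball c r := by
    rw [mem_ball, Complex.dist_eq, habs1]; rw [hrdef]; linarith
  have mem₂ : s ∈ ball c r := by
    rw [mem_ball, Complex.dist_eq, habs2]; rw [hrdef]; linarith
  have e₁ := hdc.circleIntegral_sub_inv_smul mem₁
  have e₂ := hdc.circleIntegral_sub_inv_smul mem₂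
  have hsphere : sphere c r ⊆ {w : ℂ | 0 < w.re} := (sphere_subset_closedBall).trans hsub
  -- lower bounds for distances on the sphere
  have hw1 : ∀ w ∈ sphere c r, σ/2 ≤ ‖w - (s + z)‖ := by
    intro w hw
    rw [mem_sphere, Complex.dist_eq] at hw
    have := norm_sub_norm_le (w - c) (s + z - c)
    have he : w - c - (s + z - c) = w - (s + z) := by ring
    rw [he, hw, habs1] at this
    rw [hrdef] at this; linarith
  have hw2 : ∀ w ∈ sphere c r, σ/2 ≤ ‖w - s‖ := by
    intro w hw
    rw [mem_sphere, Complex.dist_eq] at hw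
    have := norm_sub_norm_le (w - c) (s - c)
    have he : w - c - (s - c) = w - s := by ring
    rw [he, hw, habs2] at this
    rw [hrdef] at this; linarith
  have hne1 : ∀ w ∈ sphere c r, w - (s + z) ≠ 0 := by
    intro w hw
    have := hw1 w hw
    intro h0; rw [h0] at this; simp at this; linarith
  have hne2 : ∀ w ∈ sphere c r, w - s ≠ 0 := by
    intro w hw
    have := hw2 w hw
    intro h0; rw [h0] at this; simp at this; linarith
  have hfc : ContinuousOn f (sphere c r) := hf.continuousOn.mono hsphere
  have ci₁ : CircleIntegrable (fun w => (w - (s + z))⁻¹ • f w) c r := by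
    apply ContinuousOn.circleIntegrable hr.le
    exact (((continuousOn_id).sub continuousOn_const).inv₀ hne1).smul hfc
  have ci₂ : CircleIntegrable (fun w => (w - s)⁻¹ • f w) c r := by
    apply ContinuousOn.circleIntegrable hr.le
    exact (((continuousOn_id).sub continuousOn_const).inv₀ hne2).smul hfc
  have key : (∮ w in C(c, r), ((w - (s + z))⁻¹ - (w - s)⁻¹) • f w)
      = (2 * ↑π * I) • (f (s + z) - f s) := by
    have hfun : (fun w => ((w - (s + z))⁻¹ - (w - s)⁻¹) • f w)
        = fun w => (w - (s + z))⁻¹ • f w - (w - s)⁻¹ • f w := by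
      funext w; rw [sub_smul]
    rw [hfun, circleIntegral.integral_sub ci₁ ci₂, e₁, e₂, ← smul_sub]
  -- representation
  have hπI : (2 * (π:ℂ) * I) ≠ 0 := by
    simp [Real.pi_ne_zero, Complex.I_ne_zero, Complex.ofReal_ne_zero]
  have hrepr : f (s + z) - f s
      = (2 * ↑π * I)⁻¹ * ∮ w in C(c, r), ((w - (s + z))⁻¹ - (w - s)⁻¹) • f w := by
    rw [key, smul_eq_mul, ← mul_assoc, inv_mul_cancel₀ hπI, one_mul]
  have habsπ : ‖2 * ↑π * I‖ = 2 * π := by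
    simp [norm_mul, Complex.norm_two, Complex.norm_I, Complex.norm_real,
      _root_.abs_of_nonneg Real.pi_nonneg]
  -- continuity data
  have contW : Continuous (circleMap c r) := continuous_circleMap c r
  have contF : Continuous fun θ => f (circleMap c r θ) :=
    hf.continuousOn.comp_continuous contW fun θ => hsphere (circleMap_mem_sphere c hr.le θ)
  have cont1 : Continuous fun θ => (circleMap c r θ - (s + z))⁻¹ :=
    (contW.sub continuous_const).inv₀ fun θ => hne1 _ (circleMap_mem_sphere c hr.le θ)
  have cont2 : Continuous fun θ => (circleMap c r θ - s)⁻¹ :=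
    (contW.sub continuous_const).inv₀ fun θ => hne2 _ (circleMap_mem_sphere c hr.le θ)
  -- pointwise bound on the circle
  have hpt : ∀ θ : ℝ, ‖deriv (circleMap c r) θ •
        (((circleMap c r θ - (s + z))⁻¹ - (circleMap c r θ - s)⁻¹) • f (circleMap c r θ))‖
      ≤ r * (4 * ‖z‖ / σ^2) * ‖f (circleMap c r θ)‖ := by
    intro θ
    set w : ℂ := circleMap c r θ with hw
    have hwmem : w ∈ sphere c r := circleMap_mem_sphere c hr.le θ
    have hA : σ/2 ≤ ‖w - (s + z)‖ := hw1 w hwmem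
    have hB : σ/2 ≤ ‖w - s‖ := hw2 w hwmem
    have hAne : w - (s + z) ≠ 0 := hne1 w hwmem
    have hBne : w - s ≠ 0 := hne2 w hwmem
    have hinv : (w - (s + z))⁻¹ - (w - s)⁻¹ = z / ((w - (s + z)) * (w - s)) := by
      field_simp
      ring
    have hinvabs : ‖(w - (s + z))⁻¹ - (w - s)⁻¹‖
        ≤ 4 * ‖z‖ / σ^2 := by
      rw [hinv, norm_div, norm_mul]
      have hmul : σ/2 * (σ/2) ≤ ‖w - (s + z)‖ * ‖w - s‖ :=
        mul_le_mul hA hB (by positivity) (norm_nonneg _)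
      calc ‖z‖ / (‖w - (s + z)‖ * ‖w - s‖)
          ≤ ‖z‖ / (σ/2 * (σ/2)) := by
            apply div_le_div_of_nonneg_left hz0 (by positivity) hmul
        _ = 4 * ‖z‖ / σ^2 := by field_simp; ring
    rw [norm_smul, norm_smul, deriv_circleMap]
    simp only [norm_mul, norm_circleMap_zero, Complex.norm_I, mul_one]
    rw [_root_.abs_of_nonneg hr.le]
    have h1 : ‖(w - (s + z))⁻¹ - (w - s)⁻¹‖ * ‖f w‖
        ≤ (4 * ‖z‖ / σ^2) * ‖f w‖ :=
      mul_le_mul_of_nonneg_right hinvabs (norm_nonneg _)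
    calc r * (‖(w - (s + z))⁻¹ - (w - s)⁻¹‖ * ‖f w‖)
        ≤ r * ((4 * ‖z‖ / σ^2) * ‖f w‖) :=
          mul_le_mul_of_nonneg_left h1 hr.le
      _ = r * (4 * ‖z‖ / σ^2) * ‖f w‖ := by ring
  -- bound on the circle integral
  have hbound : ‖∮ w in C(c, r), ((w - (s + z))⁻¹ - (w - s)⁻¹) • f w‖
      ≤ r * (4 * ‖z‖ / σ^2) *
        ∫ θ in (0:ℝ)..(2*π), ‖f (circleMap c r θ)‖ := by
    rw [circleIntegral]
    have h2π : (0:ℝ) ≤ 2*π := by positivity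
    calc ‖(∫ θ in (0:ℝ)..(2*π), deriv (circleMap c r) θ •
            (((circleMap c r θ - (s + z))⁻¹ - (circleMap c r θ - s)⁻¹) • f (circleMap c r θ)))‖
        ≤ ∫ θ in (0:ℝ)..(2*π), ‖deriv (circleMap c r) θ •
            (((circleMap c r θ - (s + z))⁻¹ - (circleMap c r θ - s)⁻¹) • f (circleMap c r θ))‖ :=
          intervalIntegral.norm_integral_le_integral_norm h2π
      _ ≤ ∫ θ in (0:ℝ)..(2*π),
            r * (4 * ‖z‖ / σ^2) * ‖f (circleMap c r θ)‖ := by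
          apply intervalIntegral.integral_mono_on h2π _ _ fun θ _ => hpt θ
          · apply Continuous.intervalIntegrable
            simp only [deriv_circleMap]
            apply Continuous.norm
            exact ((continuous_circleMap 0 r).mul continuous_const).smul
              ((cont1.sub cont2).smul contF)
          · exact (((continuous_const).mul (continuous_norm.comp contF))).intervalIntegrable _ _
      _ = r * (4 * ‖z‖ / σ^2) *
            ∫ θ in (0:ℝ)..(2*π), ‖f (circleMap c r θ)‖ := by
          rw [← intervalIntegral.integral_const_mul]
  -- conclude
  have hfinal : ‖f (s + z) - f s‖
      = (2*π)⁻¹ * ‖∮ w in C(c, r), ((w - (s + z))⁻¹ - (w - s)⁻¹) • f w‖ := by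
    rw [hrepr, norm_mul, norm_inv, habsπ]
  rw [hfinal]
  have h2πpos : (0:ℝ) < (2*π)⁻¹ := by positivity
  calc (2*π)⁻¹ * ‖∮ w in C(c, r), ((w - (s + z))⁻¹ - (w - s)⁻¹) • f w‖
      ≤ (2*π)⁻¹ * (r * (4 * ‖z‖ / σ^2) *
          ∫ θ in (0:ℝ)..(2*π), ‖f (circleMap c r θ)‖) :=
        mul_le_mul_of_nonneg_left hbound h2πpos.le
    _ = (2*π)⁻¹ * (4 * ‖z‖ / σ^2 * r *
          ∫ θ in (0:ℝ)..(2*π), ‖f (circleMap c r θ)‖) := by ring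


private lemma point_eq (σ t : ℝ) (z : ℂ) :
    (σ:ℂ) + t * I + z = ((σ + z.re : ℝ) : ℂ) + ((t + z.im : ℝ) : ℂ) * I := by
  apply Complex.ext <;> simp

private lemma circleMap_eq (σ t : ℝ) (z : ℂ) (r θ : ℝ) :
    circleMap ((σ:ℂ) + t * I + z/2) r θ
      = ((σ + z.re/2 + r * Real.cos θ : ℝ) : ℂ)
        + ((t + (z.im/2 + r * Real.sin θ) : ℝ) : ℂ) * I := by
  apply Complex.ext <;>
    simp [circleMap, Complex.exp_ofReal_mul_I_re, Complex.exp_ofReal_mul_I_im, Complex.cos_ofReal_re, Complex.sin_ofReal_re,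
      Complex.add_re, Complex.add_im, Complex.mul_re, Complex.mul_im,
      Complex.div_ofNat_re, Complex.div_ofNat_im] <;> ring

private lemma finishAux {p C T σ E az J : ℝ} (hp : 1 ≤ p) (hC0 : 0 ≤ C) (hT : 0 < T)
    (hσ : 0 < σ) (haz : 0 ≤ az) (hE : 0 ≤ E) (hJ0 : 0 ≤ J)
    (hJ : J ≤ 2*T*(E^p * ((1+σ+az)*C)))
    (hcmp : E ≤ 3*(az/σ^2)*(1+σ+az)) :
    ((1/(2*T)) * J) ^ (1/p) ≤ 3 * C^(1/p) * (az/σ^2) * (1+σ+az)^(1/p+1) := by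
  have hp0 : (0:ℝ) < p := by linarith
  have hBpos : (0:ℝ) < 1+σ+az := by linarith
  have hM0 : 0 ≤ (1+σ+az)*C := by positivity
  have h2T : (0:ℝ) < 2*T := by linarith
  have h1 : (1/(2*T)) * J ≤ E^p * ((1+σ+az)*C) := by
    rw [div_mul_eq_mul_div, one_mul, div_le_iff₀ h2T]
    calc J ≤ 2*T*(E^p * ((1+σ+az)*C)) := hJ
      _ = E^p * ((1+σ+az)*C) * (2*T) := by ring
  have h2 : ((1/(2*T)) * J) ^ (1/p) ≤ (E^p * ((1+σ+az)*C)) ^ (1/p) :=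
    Real.rpow_le_rpow (by positivity) h1 (by positivity)
  have h3 : (E^p * ((1+σ+az)*C)) ^ (1/p) = E * ((1+σ+az)^(1/p) * C^(1/p)) := by
    rw [Real.mul_rpow (Real.rpow_nonneg hE p) hM0,
      Real.mul_rpow hBpos.le hC0, one_div, Real.rpow_rpow_inv hE hp0.ne']
  have h4 : (1+σ+az)^(1/p+1) = (1+σ+az)^(1/p) * (1+σ+az) := by
    rw [Real.rpow_add hBpos, Real.rpow_one]
  rw [h4]
  have h5 : 0 ≤ (1+σ+az)^(1/p) * C^(1/p) :=
    mul_nonneg (Real.rpow_nonneg hBpos.le _) (Real.rpow_nonneg hC0 _)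
  calc ((1/(2*T)) * J) ^ (1/p) ≤ E * ((1+σ+az)^(1/p) * C^(1/p)) := h2.trans_eq h3
    _ ≤ (3*(az/σ^2)*(1+σ+az)) * ((1+σ+az)^(1/p) * C^(1/p)) :=
        mul_le_mul_of_nonneg_right hcmp h5
    _ = 3 * C^(1/p) * (az/σ^2) * ((1+σ+az)^(1/p) * (1+σ+az)) := by ring
set_option maxHeartbeats 2000000 in
theorem stmt_2 (p C : ℝ) (hp : 1 ≤ p) (f : ℂ → ℂ)
    (hf : DifferentiableOn ℂ f {s : ℂ | 0 < s.re})
    (hC : ∀ σ : ℝ, 0 < σ → ∀ T : ℝ, 1 ≤ T →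
      (1 / (2 * T)) * ∫ t in (-T)..T, ‖f (σ + t * I)‖ ^ p ≤ C) :
    ∀ T : ℝ, 1 ≤ T → ∀ σ : ℝ, 0 < σ → ∀ z : ℂ, 0 < z.re →
      ((1 / (2 * T)) *
          ∫ t in (-T)..T,
            ‖f (σ + t * I + z) - f (σ + t * I)‖ ^ p) ^ (1 / p) ≤
        3 * C ^ (1 / p) * (‖z‖ / σ ^ 2) *
          (1 + σ + ‖z‖) ^ (1 / p + 1) := by
  intro T hT σ hσ z hz
  have hC0 : 0 ≤ C := C_nonneg hC
  have hfc : ContinuousOn f {s : ℂ | 0 < s.re} := hf.continuousOn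
  have hp0 : (0:ℝ) < p := by linarith
  have hT0 : (0:ℝ) < T := by linarith
  have hz0 : 0 ≤ ‖z‖ := norm_nonneg z
  have hπ : (0:ℝ) < π := Real.pi_pos
  have mem1 : ∀ t : ℝ, ((σ:ℂ) + t * I + z) ∈ {s : ℂ | 0 < s.re} := by
    intro t
    have : ((σ:ℂ) + t * I + z).re = σ + z.re := by simp
    simp only [Set.mem_setOf_eq, this]; linarith
  have mem2 : ∀ t : ℝ, ((σ:ℂ) + t * I) ∈ {s : ℂ | 0 < s.re} := by
    intro t
    have : ((σ:ℂ) + t * I).re = σ := by simp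
    simp only [Set.mem_setOf_eq, this]; linarith
  have contdiff : Continuous fun t : ℝ =>
      ‖f (σ + t * I + z) - f (σ + t * I)‖ ^ p :=
    (rpow_cont hp0.le).comp <| continuous_norm.comp <|
      ((hfc.comp_continuous (by continuity) mem1).sub (hfc.comp_continuous (by continuity) mem2))
  have hJ0 : 0 ≤ ∫ t in (-T)..T, ‖f (σ + t * I + z) - f (σ + t * I)‖ ^ p :=
    intervalIntegral.integral_nonneg (by linarith) fun x _ => by positivity
  have hBC : C ≤ (1 + σ + ‖z‖) * C := by nlinarith
  rcases le_or_gt σ (‖z‖) with hcase | hcase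
  · -- trivial case: |z| ≥ σ
    have contA : Continuous fun t : ℝ => ‖f (σ + t * I + z)‖ ^ p :=
      (rpow_cont hp0.le).comp <| continuous_norm.comp <|
        (hfc.comp_continuous (by continuity) mem1)
    have contB : Continuous fun t : ℝ => ‖f (σ + t * I)‖ ^ p :=
      vert_cont hp0.le hfc hσ
    have hptw : ∀ t ∈ Set.Icc (-T) T,
        ‖f (σ + t * I + z) - f (σ + t * I)‖ ^ p
        ≤ 2^(p-1) * (‖f (σ + t * I + z)‖ ^ p + ‖f (σ + t * I)‖ ^ p) := by
      intro t _
      have h1 : ‖f (σ + t * I + z) - f (σ + t * I)‖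
          ≤ ‖f (σ + t * I + z)‖ + ‖f (σ + t * I)‖ := by
        simpa using
          norm_sub_le (f (σ + t * I + z)) (f (σ + t * I))
      calc ‖f (σ + t * I + z) - f (σ + t * I)‖ ^ p
          ≤ (‖f (σ + t * I + z)‖ + ‖f (σ + t * I)‖) ^ p :=
            Real.rpow_le_rpow (norm_nonneg _) h1 hp0.le
        _ ≤ 2^(p-1) * (‖f (σ + t * I + z)‖ ^ p + ‖f (σ + t * I)‖ ^ p) :=
            two_pow_ineq hp (norm_nonneg _) (norm_nonneg _)
    have hA : ∫ t in (-T)..T, ‖f (σ + t * I + z)‖ ^ p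
        ≤ 2*T*((1 + σ + ‖z‖)*C) := by
      have he : ∫ t in (-T)..T, ‖f (σ + t * I + z)‖ ^ p
          = ∫ t in (-T)..T, ‖f (((σ + z.re : ℝ):ℂ) + ((t + z.im : ℝ):ℂ) * I)‖ ^ p :=
        intervalIntegral.integral_congr fun t _ => by rw [point_eq]
      rw [he]
      have h2 := shiftA hp hfc hC (show (0:ℝ) < σ + z.re by linarith) z.im hT
      have h3 : 2*T*((1 + |z.im|)*C) ≤ 2*T*((1 + σ + ‖z‖)*C) := by
        have h30 : (1 + |z.im|)*C ≤ (1 + σ + ‖z‖)*C := by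
          nlinarith [Complex.abs_im_le_norm z]
        exact mul_le_mul_of_nonneg_left h30 (by linarith)
      linarith
    have hB : ∫ t in (-T)..T, ‖f (σ + t * I)‖ ^ p
        ≤ 2*T*((1 + σ + ‖z‖)*C) := by
      have h2 := hC σ hσ T hT
      have h4 : (0:ℝ) < 2*T := by linarith
      rw [div_mul_eq_mul_div, one_mul, div_le_iff₀ h4] at h2
      nlinarith
    have hstep : ∫ t in (-T)..T, ‖f (σ + t * I + z) - f (σ + t * I)‖ ^ p
        ≤ 2*T*((2:ℝ)^p * ((1 + σ + ‖z‖)*C)) := by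
      have h5 : ∫ t in (-T)..T, ‖f (σ + t * I + z) - f (σ + t * I)‖ ^ p
          ≤ ∫ t in (-T)..T, 2^(p-1) * (‖f (σ + t * I + z)‖ ^ p
              + ‖f (σ + t * I)‖ ^ p) :=
        intervalIntegral.integral_mono_on (by linarith) (contdiff.intervalIntegrable _ _)
          ((continuous_const.mul (contA.add contB)).intervalIntegrable _ _) hptw
      have h6 : ∫ t in (-T)..T, 2^(p-1) * (‖f (σ + t * I + z)‖ ^ p
            + ‖f (σ + t * I)‖ ^ p)
          = 2^(p-1) * ((∫ t in (-T)..T, ‖f (σ + t * I + z)‖ ^ p)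
            + ∫ t in (-T)..T, ‖f (σ + t * I)‖ ^ p) := by
        rw [intervalIntegral.integral_const_mul,
          intervalIntegral.integral_add (contA.intervalIntegrable _ _)
            (contB.intervalIntegrable _ _)]
      have h2p : (2:ℝ)^p = 2*2^(p-1) := by
        rw [show p = 1 + (p-1) by ring, Real.rpow_add (by norm_num : (0:ℝ) < 2), Real.rpow_one]
        ring_nf
      have h7 : (0:ℝ) ≤ 2^(p-1) := Real.rpow_nonneg (by norm_num) _
      calc ∫ t in (-T)..T, ‖f (σ + t * I + z) - f (σ + t * I)‖ ^ p
          ≤ 2^(p-1) * ((∫ t in (-T)..T, ‖f (σ + t * I + z)‖ ^ p)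
            + ∫ t in (-T)..T, ‖f (σ + t * I)‖ ^ p) := by rw [← h6]; exact h5
        _ ≤ 2^(p-1) * (2*T*((1 + σ + ‖z‖)*C) + 2*T*((1 + σ + ‖z‖)*C)) :=
            mul_le_mul_of_nonneg_left (by linarith) h7
        _ = 2*T*((2*2^(p-1)) * ((1 + σ + ‖z‖)*C)) := by ring
        _ = 2*T*((2:ℝ)^p * ((1 + σ + ‖z‖)*C)) := by rw [h2p]
    have hcmp : (2:ℝ) ≤ 3*(‖z‖/σ^2)*(1 + σ + ‖z‖) := by
      have he : 3*(‖z‖/σ^2)*(1 + σ + ‖z‖)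
          = 3*(‖z‖*(1 + σ + ‖z‖))/σ^2 := by ring
      rw [he, le_div_iff₀ (by positivity)]
      nlinarith [mul_le_mul hcase (show σ + σ ≤ 1 + σ + ‖z‖ by linarith)
        (by linarith) hz0]
    exact finishAux hp hC0 hT0 hσ hz0 (by norm_num) hJ0 hstep hcmp
  · -- main case: |z| < σ, via Cauchy's integral formula
    set az : ℝ := ‖z‖ with hazdef
    have hr : (0:ℝ) < (σ + az)/2 := by positivity
    -- the circle stays in the right half-plane
    have hcircle_re : ∀ t θ : ℝ, 0 < (circleMap ((σ:ℂ) + t * I + z/2) ((σ + az)/2) θ).re := by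
      intro t θ
      rw [circleMap_eq]
      have hre : (((σ + z.re/2 + (σ + az)/2 * Real.cos θ : ℝ) : ℂ)
          + ((t + (z.im/2 + (σ + az)/2 * Real.sin θ) : ℝ) : ℂ) * I).re
          = σ + z.re/2 + (σ + az)/2 * Real.cos θ := by
        simp only [Complex.add_re, Complex.mul_re, Complex.ofReal_re, Complex.ofReal_im,
          Complex.I_re, Complex.I_im, mul_zero, mul_one, zero_mul, sub_zero, add_zero]
      rw [hre]
      nlinarith [mul_le_mul_of_nonneg_left (Real.neg_one_le_cos θ) hr.le,
        Real.neg_one_le_cos θ]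
    have hcirclemem : ∀ t θ : ℝ,
        circleMap ((σ:ℂ) + t * I + z/2) ((σ + az)/2) θ ∈ {s : ℂ | 0 < s.re} :=
      fun t θ => hcircle_re t θ
    -- joint continuity
    have contQ : Continuous fun q : ℝ × ℝ =>
        ‖f (circleMap ((σ:ℂ) + q.1 * I + z/2) ((σ + az)/2) q.2)‖ ^ p := by
      have hmap : Continuous fun q : ℝ × ℝ =>
          circleMap ((σ:ℂ) + q.1 * I + z/2) ((σ + az)/2) q.2 := by
        have he : (fun q : ℝ × ℝ => circleMap ((σ:ℂ) + q.1 * I + z/2) ((σ + az)/2) q.2)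
            = fun q : ℝ × ℝ => ((σ:ℂ) + q.1 * I + z/2)
              + (((σ + az)/2 : ℝ) : ℂ) * Complex.exp (q.2 * I) := by
          funext q; rw [circleMap]
        rw [he]
        exact (((continuous_const.add ((Complex.continuous_ofReal.comp continuous_fst).mul
          continuous_const)).add continuous_const)).add (continuous_const.mul
          (Complex.continuous_exp.comp ((Complex.continuous_ofReal.comp continuous_snd).mul
            continuous_const)))
      exact (rpow_cont hp0.le).comp (continuous_norm.comp
        (hfc.comp_continuous hmap fun q => hcirclemem q.1 q.2))
    haveI hfinπ : IsFiniteMeasure (volume.restrict (Set.Ioc (0:ℝ) (2*π))) := ⟨by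
      rw [Measure.restrict_apply_univ, Real.volume_Ioc]; exact ENNReal.ofReal_lt_top⟩
    have hQint : Integrable (fun q : ℝ × ℝ =>
        ‖f (circleMap ((σ:ℂ) + q.1 * I + z/2) ((σ + az)/2) q.2)‖ ^ p)
        ((volume.restrict (Set.Ioc (-T) T)).prod (volume.restrict (Set.Ioc (0:ℝ) (2*π)))) := by
      rw [Measure.prod_restrict, ← Measure.volume_eq_prod]
      exact (contQ.continuousOn.integrableOn_compact
        (isCompact_Icc.prod isCompact_Icc)).mono_set
        (Set.prod_mono Set.Ioc_subset_Icc_self Set.Ioc_subset_Icc_self)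
    -- pointwise bound via Cauchy + Jensen
    have hptw : ∀ t ∈ Set.Icc (-T) T,
        ‖f (σ + t * I + z) - f (σ + t * I)‖ ^ p
        ≤ (4*az/σ^2*((σ + az)/2))^p * ((2*π)⁻¹ *
          ∫ θ in (0:ℝ)..(2*π),
            ‖f (circleMap ((σ:ℂ) + t * I + z/2) ((σ + az)/2) θ)‖ ^ p) := by
      intro t _
      have h1 := cauchyAux hf hσ hz hcase t
      have contg : Continuous fun θ =>
          ‖f (circleMap ((σ:ℂ) + t * I + z/2) ((σ + az)/2) θ)‖ :=
        continuous_norm.comp (hfc.comp_continuous (continuous_circleMap _ _)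
          fun θ => hcirclemem t θ)
      have hjen := jensenAux hp contg fun θ => norm_nonneg _
      have hg0 : 0 ≤ ∫ θ in (0:ℝ)..(2*π),
          ‖f (circleMap ((σ:ℂ) + t * I + z/2) ((σ + az)/2) θ)‖ :=
        intervalIntegral.integral_nonneg (by positivity) fun x _ => norm_nonneg _
      have hK0' : (0:ℝ) ≤ 4*az/σ^2*((σ + az)/2) := by positivity
      have h2πpos : (0:ℝ) < 2*π := by positivity
      have hid : ((2*π)⁻¹)^p * (2*π)^(p-1) = (2*π)⁻¹ := by
        rw [Real.inv_rpow h2πpos.le, ← Real.rpow_neg h2πpos.le, ← Real.rpow_add h2πpos,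
          show -p + (p-1) = -1 by ring, Real.rpow_neg_one]
      calc ‖f (σ + t * I + z) - f (σ + t * I)‖ ^ p
          ≤ ((2*π)⁻¹ * (4*az/σ^2*((σ + az)/2) *
              ∫ θ in (0:ℝ)..(2*π),
                ‖f (circleMap ((σ:ℂ) + t * I + z/2) ((σ + az)/2) θ)‖)) ^ p :=
            Real.rpow_le_rpow (norm_nonneg _) h1 hp0.le
        _ = ((2*π)⁻¹)^p * ((4*az/σ^2*((σ + az)/2))^p *
              (∫ θ in (0:ℝ)..(2*π),
                ‖f (circleMap ((σ:ℂ) + t * I + z/2) ((σ + az)/2) θ)‖) ^ p) := by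
            rw [Real.mul_rpow (by positivity) (mul_nonneg hK0' hg0),
              Real.mul_rpow hK0' hg0]
        _ ≤ ((2*π)⁻¹)^p * ((4*az/σ^2*((σ + az)/2))^p * ((2*π)^(p-1) *
              ∫ θ in (0:ℝ)..(2*π),
                ‖f (circleMap ((σ:ℂ) + t * I + z/2) ((σ + az)/2) θ)‖ ^ p)) := by
            apply mul_le_mul_of_nonneg_left _ (by positivity)
            exact mul_le_mul_of_nonneg_left hjen (by positivity)
        _ = (4*az/σ^2*((σ + az)/2))^p * ((((2*π)⁻¹)^p * (2*π)^(p-1)) *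
              ∫ θ in (0:ℝ)..(2*π),
                ‖f (circleMap ((σ:ℂ) + t * I + z/2) ((σ + az)/2) θ)‖ ^ p) := by
            ring
        _ = (4*az/σ^2*((σ + az)/2))^p * ((2*π)⁻¹ *
              ∫ θ in (0:ℝ)..(2*π),
                ‖f (circleMap ((σ:ℂ) + t * I + z/2) ((σ + az)/2) θ)‖ ^ p) := by
            rw [hid]
    -- integrability of the parametric integral
    have hIpar : Integrable (fun t : ℝ => ∫ θ,
        ‖f (circleMap ((σ:ℂ) + t * I + z/2) ((σ + az)/2) θ)‖ ^ p
          ∂(volume.restrict (Set.Ioc (0:ℝ) (2*π)))) (volume.restrict (Set.Ioc (-T) T)) :=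
      hQint.integral_prod_left
    have hIconv : ∀ t : ℝ, (∫ θ in (0:ℝ)..(2*π),
        ‖f (circleMap ((σ:ℂ) + t * I + z/2) ((σ + az)/2) θ)‖ ^ p)
        = ∫ θ, ‖f (circleMap ((σ:ℂ) + t * I + z/2) ((σ + az)/2) θ)‖ ^ p
            ∂(volume.restrict (Set.Ioc (0:ℝ) (2*π))) :=
      fun t => intervalIntegral.integral_of_le (by positivity)
    have hRHSint : IntervalIntegrable (fun t => (4*az/σ^2*((σ + az)/2))^p * ((2*π)⁻¹ *
        ∫ θ in (0:ℝ)..(2*π),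
          ‖f (circleMap ((σ:ℂ) + t * I + z/2) ((σ + az)/2) θ)‖ ^ p))
        volume (-T) T := by
      rw [intervalIntegrable_iff_integrableOn_Ioc_of_le (by linarith)]
      simp only [hIconv]
      exact (hIpar.const_mul _).const_mul _
    have hIa : ∫ t in (-T)..T, ‖f (σ + t * I + z) - f (σ + t * I)‖ ^ p
        ≤ ∫ t in (-T)..T, (4*az/σ^2*((σ + az)/2))^p * ((2*π)⁻¹ *
            ∫ θ in (0:ℝ)..(2*π),
              ‖f (circleMap ((σ:ℂ) + t * I + z/2) ((σ + az)/2) θ)‖ ^ p) :=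
      intervalIntegral.integral_mono_on (by linarith) (contdiff.intervalIntegrable _ _)
        hRHSint hptw
    -- Fubini
    have hswap : ∫ t, (∫ θ,
          ‖f (circleMap ((σ:ℂ) + t * I + z/2) ((σ + az)/2) θ)‖ ^ p
            ∂(volume.restrict (Set.Ioc (0:ℝ) (2*π)))) ∂(volume.restrict (Set.Ioc (-T) T))
        = ∫ θ, (∫ t,
          ‖f (circleMap ((σ:ℂ) + t * I + z/2) ((σ + az)/2) θ)‖ ^ p
            ∂(volume.restrict (Set.Ioc (-T) T))) ∂(volume.restrict (Set.Ioc (0:ℝ) (2*π))) :=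
      integral_integral_swap hQint
    -- inner bound
    have hinner : ∀ θ : ℝ, (∫ t,
        ‖f (circleMap ((σ:ℂ) + t * I + z/2) ((σ + az)/2) θ)‖ ^ p
          ∂(volume.restrict (Set.Ioc (-T) T))) ≤ 2*T*((1 + σ + az)*C) := by
      intro θ
      have ha : (0:ℝ) < σ + z.re/2 + (σ + az)/2*Real.cos θ := by
        nlinarith [mul_le_mul_of_nonneg_left (Real.neg_one_le_cos θ) hr.le]
      have hconv : (∫ t, ‖f (circleMap ((σ:ℂ) + t * I + z/2) ((σ + az)/2) θ)‖ ^ p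
            ∂(volume.restrict (Set.Ioc (-T) T)))
          = ∫ t in (-T)..T,
              ‖f (circleMap ((σ:ℂ) + t * I + z/2) ((σ + az)/2) θ)‖ ^ p :=
        (intervalIntegral.integral_of_le (by linarith)).symm
      rw [hconv]
      have heq2 : ∫ t in (-T)..T,
            ‖f (circleMap ((σ:ℂ) + t * I + z/2) ((σ + az)/2) θ)‖ ^ p
          = ∫ t in (-T)..T, ‖f (((σ + z.re/2 + (σ + az)/2*Real.cos θ : ℝ):ℂ)
              + ((t + (z.im/2 + (σ + az)/2*Real.sin θ) : ℝ):ℂ) * I)‖ ^ p :=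
        intervalIntegral.integral_congr fun t _ => by rw [circleMap_eq]
      rw [heq2]
      have hsh := shiftA hp hfc hC ha (z.im/2 + (σ + az)/2*Real.sin θ) hT
      have hv : |z.im/2 + (σ + az)/2*Real.sin θ| ≤ σ + az := by
        have h1 : |z.im/2 + (σ + az)/2*Real.sin θ| ≤ |z.im/2| + |(σ + az)/2*Real.sin θ| :=
          abs_add_le _ _
        have h2 : |z.im/2| = |z.im|/2 := by rw [abs_div]; norm_num
        have h3 : |(σ + az)/2*Real.sin θ| = (σ + az)/2*|Real.sin θ| := by
          rw [abs_mul, _root_.abs_of_nonneg hr.le]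
        have h4 := Complex.abs_im_le_norm z
        have h5 : (σ + az)/2*|Real.sin θ| ≤ (σ + az)/2 := by
          nlinarith [Real.abs_sin_le_one θ, hr.le]
        rw [h2, h3] at h1
        have : |z.im| ≤ az := h4
        linarith
      have hfin : 2*T*((1 + |z.im/2 + (σ + az)/2*Real.sin θ|)*C) ≤ 2*T*((1 + σ + az)*C) := by
        apply mul_le_mul_of_nonneg_left _ (by linarith)
        nlinarith
      linarith
    have houter : Integrable (fun θ : ℝ => ∫ t,
        ‖f (circleMap ((σ:ℂ) + t * I + z/2) ((σ + az)/2) θ)‖ ^ p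
          ∂(volume.restrict (Set.Ioc (-T) T))) (volume.restrict (Set.Ioc (0:ℝ) (2*π))) :=
      hQint.swap.integral_prod_left
    have hob : (∫ θ, (∫ t,
          ‖f (circleMap ((σ:ℂ) + t * I + z/2) ((σ + az)/2) θ)‖ ^ p
            ∂(volume.restrict (Set.Ioc (-T) T))) ∂(volume.restrict (Set.Ioc (0:ℝ) (2*π))))
        ≤ (2*π) * (2*T*((1 + σ + az)*C)) := by
      calc (∫ θ, (∫ t,
            ‖f (circleMap ((σ:ℂ) + t * I + z/2) ((σ + az)/2) θ)‖ ^ p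
              ∂(volume.restrict (Set.Ioc (-T) T))) ∂(volume.restrict (Set.Ioc (0:ℝ) (2*π))))
          ≤ ∫ _θ, (2*T*((1 + σ + az)*C)) ∂(volume.restrict (Set.Ioc (0:ℝ) (2*π))) :=
            integral_mono houter (integrable_const _) hinner
        _ = (2*π) * (2*T*((1 + σ + az)*C)) := by
            rw [integral_const, measureReal_def, Measure.restrict_apply_univ, Real.volume_Ioc,
              ENNReal.toReal_ofReal (by nlinarith : (0:ℝ) ≤ 2*π - 0), smul_eq_mul]
            ring
    -- put everything together
    have hstep : ∫ t in (-T)..T, ‖f (σ + t * I + z) - f (σ + t * I)‖ ^ p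
        ≤ 2*T*((4*az/σ^2*((σ + az)/2))^p * ((1 + σ + az)*C)) := by
      have hKp0 : (0:ℝ) ≤ (4*az/σ^2*((σ + az)/2))^p := Real.rpow_nonneg (by positivity) _
      have e1 : ∫ t in (-T)..T, (4*az/σ^2*((σ + az)/2))^p * ((2*π)⁻¹ *
            ∫ θ in (0:ℝ)..(2*π),
              ‖f (circleMap ((σ:ℂ) + t * I + z/2) ((σ + az)/2) θ)‖ ^ p)
          = (4*az/σ^2*((σ + az)/2))^p * ((2*π)⁻¹ *
              ∫ t, (∫ θ, ‖f (circleMap ((σ:ℂ) + t * I + z/2) ((σ + az)/2) θ)‖ ^ p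
                ∂(volume.restrict (Set.Ioc (0:ℝ) (2*π)))) ∂(volume.restrict (Set.Ioc (-T) T))) := by
        rw [intervalIntegral.integral_const_mul, intervalIntegral.integral_const_mul]
        rw [intervalIntegral.integral_of_le (by linarith : -T ≤ T)]
        simp only [hIconv]
      have e2 : (4*az/σ^2*((σ + az)/2))^p * ((2*π)⁻¹ *
            ∫ t, (∫ θ, ‖f (circleMap ((σ:ℂ) + t * I + z/2) ((σ + az)/2) θ)‖ ^ p
              ∂(volume.restrict (Set.Ioc (0:ℝ) (2*π)))) ∂(volume.restrict (Set.Ioc (-T) T)))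
          ≤ (4*az/σ^2*((σ + az)/2))^p * ((2*π)⁻¹ * ((2*π) * (2*T*((1 + σ + az)*C)))) := by
        apply mul_le_mul_of_nonneg_left _ hKp0
        apply mul_le_mul_of_nonneg_left _ (by positivity)
        rw [hswap]
        exact hob
      have e3 : (4*az/σ^2*((σ + az)/2))^p * ((2*π)⁻¹ * ((2*π) * (2*T*((1 + σ + az)*C))))
          = 2*T*((4*az/σ^2*((σ + az)/2))^p * ((1 + σ + az)*C)) := by
        rw [← mul_assoc ((2*π)⁻¹), inv_mul_cancel₀ (by positivity : (2*π:ℝ) ≠ 0), one_mul]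
        ring
      calc ∫ t in (-T)..T, ‖f (σ + t * I + z) - f (σ + t * I)‖ ^ p
          ≤ ∫ t in (-T)..T, (4*az/σ^2*((σ + az)/2))^p * ((2*π)⁻¹ *
              ∫ θ in (0:ℝ)..(2*π),
                ‖f (circleMap ((σ:ℂ) + t * I + z/2) ((σ + az)/2) θ)‖ ^ p) := hIa
        _ = _ := e1
        _ ≤ _ := e2
        _ = _ := e3
    have hcmp : 4*az/σ^2*((σ + az)/2) ≤ 3*(az/σ^2)*(1 + σ + az) := by
      have e : 4*az/σ^2*((σ + az)/2) = (az/σ^2)*(2*(σ + az)) := by ring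
      have e2 : 3*(az/σ^2)*(1 + σ + az) = (az/σ^2)*(3*(1 + σ + az)) := by ring
      rw [e, e2]
      exact mul_le_mul_of_nonneg_left (by linarith) (by positivity)
    exact finishAux hp hC0 hT0 hσ hz0 (by positivity) hJ0 hstep hcmp
end

section
/- Let g : ℝ → [0,∞) be measurable with ∫_{-T}^{0} g(τ) dτ ≤ C(1+T) and ∫_{0}^{T} g(τ) dτ ≤ C(1+T) for all T > 0. Then for every σ > 0 and t ∈ ℝ, ∫_{-∞}^{∞} g(τ) · σ/(σ² + (t-τ)²) dτ/π ≤ 2C((1+|t|)/(πσ) + 1/2). -/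
open MeasureTheory Set

theorem stmt_7 (C : ℝ) (hC : 0 < C) (g : ℝ → ℝ) (hmeas : Measurable g)
    (hnonneg : ∀ τ, 0 ≤ g τ)
    (hleft : ∀ T : ℝ, 0 < T → ∫ τ in (-T)..0, g τ ≤ C * (1 + T))
    (hright : ∀ T : ℝ, 0 < T → ∫ τ in (0 : ℝ)..T, g τ ≤ C * (1 + T)) :
    ∀ σ t : ℝ, 0 < σ →
      (∫ τ : ℝ, g τ * (σ / (σ ^ 2 + (t - τ) ^ 2))) / Real.pi ≤
        2 * C * ((1 + |t|) / (Real.pi * σ) + 1 / 2) := by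
  intro σ t hσ
  have hπ : (0:ℝ) < Real.pi := Real.pi_pos
  have hRHS : 0 ≤ 2 * C * ((1 + |t|) / (Real.pi * σ) + 1 / 2) := by positivity
  have hKpos : ∀ s : ℝ, 0 < σ ^ 2 + s ^ 2 := fun s => by positivity
  have hKnn : ∀ s : ℝ, 0 ≤ σ / (σ ^ 2 + s ^ 2) := fun s => div_nonneg hσ.le (hKpos s).le
  have hKmeas : Measurable (fun s : ℝ => σ / (σ ^ 2 + s ^ 2)) := by fun_prop
  have hKm : Measurable (fun τ : ℝ => σ / (σ ^ 2 + (t - τ) ^ 2)) := by fun_prop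
  -- case : not integrable
  by_cases hint : Integrable (fun τ : ℝ => g τ * (σ / (σ ^ 2 + (t - τ) ^ 2)))
  swap
  · rw [integral_undef hint, zero_div]; exact hRHS
  -- local integrability of g
  have hloc : ∀ a b : ℝ, IntegrableOn g (Set.Ioc a b) := by
    intro a b
    set M := |t| + |a| + |b| with hM
    refine Integrable.mono (hint.integrableOn.const_mul ((σ ^ 2 + M ^ 2) / σ))
      hmeas.aestronglyMeasurable.restrict ?_
    rw [ae_restrict_iff' measurableSet_Ioc]
    refine ae_of_all _ fun τ hτ => ?_
    have habs : |t - τ| ≤ M := by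
      have h1 : |τ| ≤ |a| + |b| := by
        rw [abs_le]
        constructor <;> nlinarith [le_abs_self b, neg_abs_le a, hτ.1, hτ.2, abs_nonneg a, abs_nonneg b]
      calc |t - τ| ≤ |t| + |τ| := abs_sub t τ
        _ ≤ M := by rw [hM]; linarith
    have hsq : (t - τ) ^ 2 ≤ M ^ 2 := by
      rcases abs_le.mp habs with ⟨h1, h2⟩
      exact sq_le_sq' h1 h2
    have h1 : (1:ℝ) ≤ (σ ^ 2 + M ^ 2) / σ * (σ / (σ ^ 2 + (t - τ) ^ 2)) := by
      have he : (σ ^ 2 + M ^ 2) / σ * (σ / (σ ^ 2 + (t - τ) ^ 2))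
          = (σ ^ 2 + M ^ 2) / (σ ^ 2 + (t - τ) ^ 2) := by
        field_simp
      rw [he, le_div_iff₀ (hKpos (t - τ))]
      linarith
    have hg := hnonneg τ
    have h2 : g τ ≤ (σ ^ 2 + M ^ 2) / σ * (g τ * (σ / (σ ^ 2 + (t - τ) ^ 2))) := by
      nlinarith [hKnn (t - τ)]
    rw [Real.norm_eq_abs, Real.norm_eq_abs, abs_of_nonneg hg]
    exact h2.trans (le_abs_self _)
  -- linear growth of the lintegral of g over symmetric intervals
  have hlin : ∀ R : ℝ, 0 ≤ R →
      ∫⁻ τ in Set.Icc (-R) R, ENNReal.ofReal (g τ) ≤ ENNReal.ofReal (2 * C * (1 + R)) := by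
    intro R hR
    rcases eq_or_lt_of_le hR with h0 | h0
    · rw [← h0]
      have : (volume : Measure ℝ) (Set.Icc (-(0:ℝ)) 0) = 0 := by
        simp [neg_zero, Set.Icc_self]
      rw [setLIntegral_measure_zero _ _ this]
      exact zero_le
    · have e1 : ∫⁻ τ in Set.Icc (-R) R, ENNReal.ofReal (g τ)
          = ∫⁻ τ in Set.Ioc (-R) R, ENNReal.ofReal (g τ) :=
        (setLIntegral_congr (Ioc_ae_eq_Icc)).symm
      rw [e1, ← Set.Ioc_union_Ioc_eq_Ioc (by linarith : -R ≤ (0:ℝ)) hR,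
        lintegral_union measurableSet_Ioc (Set.Ioc_disjoint_Ioc_of_le le_rfl)]
      have hL : ∫⁻ τ in Set.Ioc (-R) 0, ENNReal.ofReal (g τ) ≤ ENNReal.ofReal (C * (1 + R)) := by
        rw [← ofReal_integral_eq_lintegral_ofReal (hloc _ _) (ae_of_all _ fun τ => hnonneg τ)]
        apply ENNReal.ofReal_le_ofReal
        rw [show (∫ τ in Set.Ioc (-R) 0, g τ) = ∫ τ in (-R)..0, g τ from
          (intervalIntegral.integral_of_le (by linarith)).symm]
        exact hleft R h0
      have hRt : ∫⁻ τ in Set.Ioc 0 R, ENNReal.ofReal (g τ) ≤ ENNReal.ofReal (C * (1 + R)) := by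
        rw [← ofReal_integral_eq_lintegral_ofReal (hloc _ _) (ae_of_all _ fun τ => hnonneg τ)]
        apply ENNReal.ofReal_le_ofReal
        rw [show (∫ τ in Set.Ioc 0 R, g τ) = ∫ τ in (0:ℝ)..R, g τ from
          (intervalIntegral.integral_of_le hR).symm]
        exact hright R h0
      calc _ ≤ ENNReal.ofReal (C * (1 + R)) + ENNReal.ofReal (C * (1 + R)) := add_le_add hL hRt
        _ = ENNReal.ofReal (2 * C * (1 + R)) := by
            rw [← ENNReal.ofReal_add (by positivity) (by positivity)]; ring_nf
  -- weighted measure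
  set μ : Measure ℝ := volume.withDensity (fun τ => ENNReal.ofReal (g τ)) with hμ
  have key1 : (∫⁻ τ : ℝ, ENNReal.ofReal (g τ * (σ / (σ ^ 2 + (t - τ) ^ 2))))
      = ∫⁻ l in Set.Ioi (0:ℝ), μ {τ : ℝ | l < σ / (σ ^ 2 + (t - τ) ^ 2)} := by
    have h1 : ∀ τ : ℝ, ENNReal.ofReal (g τ * (σ / (σ ^ 2 + (t - τ) ^ 2)))
        = ((fun τ => ENNReal.ofReal (g τ)) * fun τ => ENNReal.ofReal (σ / (σ ^ 2 + (t - τ) ^ 2))) τ :=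
      fun τ => ENNReal.ofReal_mul (hnonneg τ)
    calc (∫⁻ τ : ℝ, ENNReal.ofReal (g τ * (σ / (σ ^ 2 + (t - τ) ^ 2))))
        = ∫⁻ τ : ℝ, ENNReal.ofReal (σ / (σ ^ 2 + (t - τ) ^ 2)) ∂μ := by
          rw [hμ, lintegral_withDensity_eq_lintegral_mul volume hmeas.ennreal_ofReal
            hKm.ennreal_ofReal]
          exact lintegral_congr h1
      _ = ∫⁻ l in Set.Ioi (0:ℝ), μ {τ : ℝ | l < σ / (σ ^ 2 + (t - τ) ^ 2)} :=
          lintegral_eq_lintegral_meas_lt μ (ae_of_all _ fun τ => hKnn _) hKm.aemeasurable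
  have hKint : Integrable (fun s : ℝ => σ / (σ ^ 2 + s ^ 2)) := by
    have h1 : Integrable (fun s : ℝ => (1 + (s / σ) ^ 2)⁻¹) :=
      integrable_inv_one_add_sq.comp_div hσ.ne'
    have h2 := h1.const_mul σ⁻¹
    have he : (fun s : ℝ => σ / (σ ^ 2 + s ^ 2)) = fun s => σ⁻¹ * (1 + (s / σ) ^ 2)⁻¹ := by
      funext s
      have hd : (0:ℝ) < σ ^ 2 + s ^ 2 := by positivity
      field_simp
    rw [he]; exact h2
  have hKtotal : ∫ s : ℝ, σ / (σ ^ 2 + s ^ 2) = Real.pi := by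
    have he : (fun s : ℝ => σ / (σ ^ 2 + s ^ 2)) = fun s => σ⁻¹ * (1 + (s / σ) ^ 2)⁻¹ := by
      funext s; field_simp
    rw [he, MeasureTheory.integral_const_mul,
      MeasureTheory.Measure.integral_comp_div (fun u : ℝ => (1 + u ^ 2)⁻¹) σ,
      integral_univ_inv_one_add_sq, abs_of_pos hσ, smul_eq_mul]
    field_simp
  have key3 : ∫⁻ l in Set.Ioi (0:ℝ), volume {s : ℝ | l < σ / (σ ^ 2 + s ^ 2)}
      = ENNReal.ofReal Real.pi := by
    rw [← lintegral_eq_lintegral_meas_lt volume (ae_of_all _ fun s => hKnn s) hKmeas.aemeasurable,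
      ← ofReal_integral_eq_lintegral_ofReal hKint (ae_of_all _ fun s => hKnn s), hKtotal]
  have key2 : ∀ l : ℝ, 0 < l → μ {τ : ℝ | l < σ / (σ ^ 2 + (t - τ) ^ 2)} ≤
      (Set.Ioo (0:ℝ) σ⁻¹).indicator (fun _ => ENNReal.ofReal (2 * C * (1 + |t|))) l
        + ENNReal.ofReal C * volume {s : ℝ | l < σ / (σ ^ 2 + s ^ 2)} := by
    intro l hl
    by_cases hls : l < σ⁻¹
    swap
    · have hempty : {τ : ℝ | l < σ / (σ ^ 2 + (t - τ) ^ 2)} = ∅ := by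
        ext τ
        simp only [Set.mem_setOf_eq, Set.mem_empty_iff_false, iff_false, not_lt]
        have hb : σ / (σ ^ 2 + (t - τ) ^ 2) ≤ σ⁻¹ := by
          rw [div_le_iff₀ (hKpos _)]
          have hinv : σ⁻¹ * σ = 1 := inv_mul_cancel₀ hσ.ne'
          nlinarith [sq_nonneg (t - τ), inv_nonneg.mpr hσ.le]
        linarith [not_lt.mp hls]
      rw [hempty]
      simp
    · set r : ℝ := Real.sqrt (σ / l - σ ^ 2) with hr
      have hv : 0 < σ / l - σ ^ 2 := by
        rw [sub_pos, lt_div_iff₀ hl]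
        have hinv : σ⁻¹ * σ = 1 := inv_mul_cancel₀ hσ.ne'
        nlinarith [mul_lt_mul_of_pos_left hls (show (0:ℝ) < σ ^ 2 by positivity)]
      have hiff : ∀ s : ℝ, (l < σ / (σ ^ 2 + s ^ 2)) ↔ s ∈ Set.Ioo (-r) r := by
        intro s
        calc (l < σ / (σ ^ 2 + s ^ 2)) ↔ s ^ 2 + σ ^ 2 < σ / l := by
              rw [lt_div_iff₀ (hKpos s), lt_div_iff₀ hl]
              constructor <;> intro h <;> nlinarith
          _ ↔ s ^ 2 < σ / l - σ ^ 2 := lt_sub_iff_add_lt.symm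
          _ ↔ |s| ^ 2 < σ / l - σ ^ 2 := by rw [sq_abs]
          _ ↔ |s| < r := (Real.lt_sqrt (abs_nonneg s)).symm
          _ ↔ s ∈ Set.Ioo (-r) r := by rw [Set.mem_Ioo, ← abs_lt]
      have hrnn : 0 ≤ r := Real.sqrt_nonneg _
      have hsub : {τ : ℝ | l < σ / (σ ^ 2 + (t - τ) ^ 2)} ⊆ Set.Icc (-(|t| + r)) (|t| + r) := by
        intro τ hτ
        have h2 := Set.mem_Ioo.mp ((hiff (t - τ)).mp hτ)
        simp only [Set.mem_Icc]
        constructor <;> nlinarith [neg_abs_le t, le_abs_self t, h2.1, h2.2]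
      have hb1 : μ {τ : ℝ | l < σ / (σ ^ 2 + (t - τ) ^ 2)}
          ≤ ENNReal.ofReal (2 * C * (1 + (|t| + r))) := by
        refine le_trans (measure_mono hsub) ?_
        rw [hμ, withDensity_apply _ measurableSet_Icc]
        exact hlin (|t| + r) (by positivity)
      have hvol : volume {s : ℝ | l < σ / (σ ^ 2 + s ^ 2)} = ENNReal.ofReal (2 * r) := by
        have hset : {s : ℝ | l < σ / (σ ^ 2 + s ^ 2)} = Set.Ioo (-r) r := by
          ext s; exact hiff s
        rw [hset, Real.volume_Ioo]
        congr 1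
        ring
      rw [Set.indicator_of_mem (Set.mem_Ioo.mpr ⟨hl, hls⟩), hvol]
      refine hb1.trans ?_
      rw [← ENNReal.ofReal_mul hC.le, ← ENNReal.ofReal_add (by positivity) (by positivity)]
      exact ENNReal.ofReal_le_ofReal (le_of_eq (by ring))
  have main : (∫⁻ τ : ℝ, ENNReal.ofReal (g τ * (σ / (σ ^ 2 + (t - τ) ^ 2))))
      ≤ ENNReal.ofReal (2 * C * (1 + |t|) * σ⁻¹ + C * Real.pi) := by
    rw [key1]
    have step : ∫⁻ l in Set.Ioi (0:ℝ), μ {τ : ℝ | l < σ / (σ ^ 2 + (t - τ) ^ 2)}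
        ≤ ∫⁻ l in Set.Ioi (0:ℝ),
            ((Set.Ioo (0:ℝ) σ⁻¹).indicator (fun _ => ENNReal.ofReal (2 * C * (1 + |t|))) l
              + ENNReal.ofReal C * volume {s : ℝ | l < σ / (σ ^ 2 + s ^ 2)}) := by
      refine lintegral_mono_ae ?_
      rw [ae_restrict_iff' measurableSet_Ioi]
      exact ae_of_all _ fun l hl => key2 l hl
    refine step.trans ?_
    rw [lintegral_add_left (measurable_const.indicator measurableSet_Ioo),
      lintegral_const_mul' _ _ ENNReal.ofReal_ne_top, key3]
    have hind : ∫⁻ l in Set.Ioi (0:ℝ),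
        (Set.Ioo (0:ℝ) σ⁻¹).indicator (fun _ => ENNReal.ofReal (2 * C * (1 + |t|))) l
        = ENNReal.ofReal (2 * C * (1 + |t|)) * ENNReal.ofReal σ⁻¹ := by
      rw [lintegral_indicator measurableSet_Ioo, setLIntegral_const]
      congr 1
      rw [Measure.restrict_apply measurableSet_Ioo,
        Set.inter_eq_left.mpr (fun x hx => hx.1), Real.volume_Ioo, sub_zero]
    rw [hind, ← ENNReal.ofReal_mul (by positivity), ← ENNReal.ofReal_mul hC.le,
      ← ENNReal.ofReal_add (by positivity) (by positivity)]
  have hIeq : (∫ τ : ℝ, g τ * (σ / (σ ^ 2 + (t - τ) ^ 2)))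
      = (∫⁻ τ : ℝ, ENNReal.ofReal (g τ * (σ / (σ ^ 2 + (t - τ) ^ 2)))).toReal :=
    integral_eq_lintegral_of_nonneg_ae (ae_of_all _ fun τ => mul_nonneg (hnonneg τ) (hKnn _))
      (hmeas.mul hKm).aestronglyMeasurable
  have hbound : (∫ τ : ℝ, g τ * (σ / (σ ^ 2 + (t - τ) ^ 2)))
      ≤ 2 * C * (1 + |t|) * σ⁻¹ + C * Real.pi := by
    rw [hIeq]
    exact ENNReal.toReal_le_of_le_ofReal (by positivity) main
  have heq : 2 * C * ((1 + |t|) / (Real.pi * σ) + 1 / 2)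
      = (2 * C * (1 + |t|) * σ⁻¹ + C * Real.pi) / Real.pi := by
    field_simp
  rw [heq]
  gcongr
end

section
/- Let g : ℝ → [0,∞) be measurable with ∫_{-T}^{0} g(τ) dτ ≤ C(1+T) and ∫_{0}^{T} g(τ) dτ ≤ C(1+T) for all T > 0. Then for every T ≥ 1 and σ > 0, ∫_{-∞}^{∞} g(τ) · (T+σ)/((T+σ)² + τ²) dτ ≤ C(2/(T+σ) + π) ≤ 6C. -/
open MeasureTheory Set Filter Real
open scoped ENNReal

lemma denpos (a : ℝ) (ha : 0 < a) (s : ℝ) : 0 < a^2 + s^2 := by positivity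

lemma hd1 (a : ℝ) (ha : 0 < a) (s : ℝ) :
    HasDerivAt (fun s => -(a/(a^2+s^2))) (2*a*s/(a^2+s^2)^2) s := by
  have hsq : HasDerivAt (fun s : ℝ => a^2+s^2) (2*s) s := by
    simpa using (hasDerivAt_pow 2 s).const_add (a^2)
  have h := ((hsq.inv (denpos a ha s).ne').const_mul a).neg
  convert h using 1
  · rfl
  · rfl
  · funext x; simp [div_eq_mul_inv]
  field_simp

lemma hd2 (a : ℝ) (ha : 0 < a) (s : ℝ) :
    HasDerivAt (fun s => Real.arctan (s/a)) (a/(a^2+s^2)) s := by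
  have h := (Real.hasDerivAt_arctan (s/a)).comp s ((hasDerivAt_id s).div_const a)
  refine h.congr_deriv ?_
  rw [div_mul_div_comm, one_mul, eq_div_iff (by positivity)]
  field_simp

lemma hd3 (a : ℝ) (ha : 0 < a) (s : ℝ) :
    HasDerivAt (fun s => a*s/(a^2+s^2)) ((a*(a^2+s^2) - a*s*(2*s))/(a^2+s^2)^2) s := by
  have hsq : HasDerivAt (fun s : ℝ => a^2+s^2) (2*s) s := by
    simpa using (hasDerivAt_pow 2 s).const_add (a^2)
  refine (((hasDerivAt_id s).const_mul a).div hsq (denpos a ha s).ne').congr_deriv (by simp)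

lemma tend0 (a : ℝ) (ha : 0 < a) :
    Tendsto (fun s : ℝ => -(a/(a^2+s^2))) atTop (nhds 0) := by
  have h1 : Tendsto (fun s : ℝ => a^2+s^2) atTop atTop :=
    tendsto_atTop_add_const_left _ _ (tendsto_pow_atTop (by norm_num))
  have := (h1.inv_tendsto_atTop).const_mul a
  simpa [div_eq_mul_inv] using this.neg

lemma kern_eq (a : ℝ) (ha : 0 < a) (τ : ℝ) (hτ : 0 ≤ τ) :
    ∫ s in Set.Ioi τ, 2*a*s/(a^2+s^2)^2 = a/(a^2+τ^2) := by
  have := integral_Ioi_of_hasDerivAt_of_nonneg' (a := τ)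
    (fun x _ => hd1 a ha x)
    (fun x hx => by
      have : (0:ℝ) < x := lt_of_le_of_lt hτ hx
      positivity)
    (tend0 a ha)
  rw [this]; ring

lemma kern_int (a : ℝ) (ha : 0 < a) (τ : ℝ) (hτ : 0 ≤ τ) :
    IntegrableOn (fun s => 2*a*s/(a^2+s^2)^2) (Set.Ioi τ) := by
  exact integrableOn_Ioi_deriv_of_nonneg' (fun x _ => hd1 a ha x)
    (fun x hx => by
      have : (0:ℝ) < x := lt_of_le_of_lt hτ hx
      positivity)
    (tend0 a ha)

lemma aux_deriv (C a : ℝ) (ha : 0 < a) (s : ℝ) :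
    HasDerivAt (fun s => C * (Real.arctan (s/a) - a*s/(a^2+s^2) - a/(a^2+s^2)))
      (C*(1+s)*(2*a*s/(a^2+s^2)^2)) s := by
  have h := (((hd2 a ha s).sub (hd3 a ha s)).add (hd1 a ha s)).const_mul C
  have e : (fun s => C * (Real.arctan (s/a) - a*s/(a^2+s^2) - a/(a^2+s^2)))
      = (fun s => C * ((Real.arctan (s/a) - a*s/(a^2+s^2)) + -(a/(a^2+s^2)))) := by
    funext x; ring
  rw [e]
  refine h.congr_deriv ?_
  have h0 := (denpos a ha s).ne'
  field_simp
  ring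

lemma aux_tend (C a : ℝ) (ha : 0 < a) :
    Tendsto (fun s => C * (Real.arctan (s/a) - a*s/(a^2+s^2) - a/(a^2+s^2))) atTop
      (nhds (C * (Real.pi/2))) := by
  have h1 : Tendsto (fun s : ℝ => Real.arctan (s/a)) atTop (nhds (Real.pi/2)) := by
    have : Tendsto (fun s : ℝ => s/a) atTop atTop := tendsto_id.atTop_div_const ha
    exact (Real.tendsto_arctan_atTop.mono_right nhdsWithin_le_nhds).comp this
  have h2 : Tendsto (fun s : ℝ => a*s/(a^2+s^2)) atTop (nhds 0) := by
    have hden : Tendsto (fun s : ℝ => a^2/s + s) atTop atTop := by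
      apply tendsto_atTop_mono' atTop _ tendsto_id
      filter_upwards [eventually_gt_atTop (0:ℝ)] with s hs
      have : 0 ≤ a^2/s := by positivity
      simp only [id]
      linarith
    have := Tendsto.div_atTop (tendsto_const_nhds (x := a)) hden
    apply this.congr'
    filter_upwards [eventually_gt_atTop (0:ℝ)] with s hs
    field_simp
  have h3 : Tendsto (fun s : ℝ => a/(a^2+s^2)) atTop (nhds 0) := by
    have := tend0 a ha
    simpa using this.neg
  have := ((h1.sub h2).sub h3).const_mul C
  simpa using this

lemma main_eq (C a : ℝ) (hC : 0 ≤ C) (ha : 0 < a) :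
    ∫ s in Set.Ioi (0:ℝ), C*(1+s)*(2*a*s/(a^2+s^2)^2) = C * (1/a + Real.pi/2) := by
  have := integral_Ioi_of_hasDerivAt_of_nonneg' (a := (0:ℝ))
    (fun x _ => aux_deriv C a ha x)
    (fun x hx => by
      have hx' : (0:ℝ) < x := hx
      have h1 : (0:ℝ) ≤ 1 + x := by linarith
      positivity)
    (aux_tend C a ha)
  rw [this]
  rw [zero_div, Real.arctan_zero]
  have := ha.ne'
  field_simp
  ring

lemma main_int (C a : ℝ) (hC : 0 ≤ C) (ha : 0 < a) :
    IntegrableOn (fun s => C*(1+s)*(2*a*s/(a^2+s^2)^2)) (Set.Ioi (0:ℝ)) := by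
  exact integrableOn_Ioi_deriv_of_nonneg' (fun x _ => aux_deriv C a ha x)
    (fun x hx => by
      have hx' : (0:ℝ) < x := hx
      have h1 : (0:ℝ) ≤ 1 + x := by linarith
      positivity)
    (aux_tend C a ha)

lemma Wcont (a : ℝ) (ha : 0 < a) : Continuous (fun s : ℝ => 2*a*s/(a^2+s^2)^2) := by
  apply Continuous.div (by continuity) (by continuity)
  intro s
  have := denpos a ha s
  positivity

lemma half (C a : ℝ) (hC : 0 < C) (ha : 0 < a) (g : ℝ → ℝ) (hg : Measurable g)
    (hnn : ∀ τ, 0 ≤ g τ)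
    (hb : ∀ s : ℝ, 0 < s → ∫⁻ τ in Set.Ioc 0 s, ENNReal.ofReal (g τ) ≤ ENNReal.ofReal (C*(1+s))) :
    ∫⁻ τ in Set.Ioi (0:ℝ), ENNReal.ofReal (g τ * (a/(a^2+τ^2))) ≤
      ENNReal.ofReal (C * (1/a + Real.pi/2)) := by
  set W : ℝ → ℝ≥0∞ := fun s => ENNReal.ofReal (2*a*s/(a^2+s^2)^2) with hW
  have hWmeas : Measurable W := (Wcont a ha).measurable.ennreal_ofReal
  have hker : ∀ τ : ℝ, 0 ≤ τ → ∫⁻ s in Set.Ioi τ, W s = ENNReal.ofReal (a/(a^2+τ^2)) := by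
    intro τ hτ
    rw [hW]
    rw [← ofReal_integral_eq_lintegral_ofReal (kern_int a ha τ hτ) ?_, kern_eq a ha τ hτ]
    filter_upwards [ae_restrict_mem measurableSet_Ioi] with s hs
    have hs' : 0 < s := lt_of_le_of_lt hτ hs
    have := denpos a ha s
    positivity
  set S : Set (ℝ×ℝ) := {p | 0 < p.1 ∧ p.1 < p.2} with hSdef
  have hS : MeasurableSet S :=
    (measurableSet_lt measurable_const measurable_fst).inter
      (measurableSet_lt measurable_fst measurable_snd)
  set F : ℝ → ℝ → ℝ≥0∞ :=
    fun τ s => S.indicator (fun p => ENNReal.ofReal (g p.1) * W p.2) (τ, s) with hFdef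
  have hF : Measurable (Function.uncurry F) := by
    have : Function.uncurry F = S.indicator (fun p => ENNReal.ofReal (g p.1) * W p.2) := by
      funext p; simp [Function.uncurry, hFdef]
    rw [this]
    exact Measurable.indicator
      ((hg.comp measurable_fst).ennreal_ofReal.mul (hWmeas.comp measurable_snd)) hS
  have step1 : ∫⁻ τ in Set.Ioi (0:ℝ), ENNReal.ofReal (g τ * (a/(a^2+τ^2)))
      = ∫⁻ τ : ℝ, ∫⁻ s : ℝ, F τ s := by
    calc ∫⁻ τ in Set.Ioi (0:ℝ), ENNReal.ofReal (g τ * (a/(a^2+τ^2)))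
        = ∫⁻ τ in Set.Ioi (0:ℝ), ENNReal.ofReal (g τ) * ENNReal.ofReal (a/(a^2+τ^2)) := by
          apply setLIntegral_congr_fun measurableSet_Ioi
          exact fun τ _ => ENNReal.ofReal_mul (hnn τ)
      _ = ∫⁻ τ in Set.Ioi (0:ℝ), ENNReal.ofReal (g τ) * ∫⁻ s in Set.Ioi τ, W s := by
          apply setLIntegral_congr_fun measurableSet_Ioi
          exact fun τ hτ => by rw [hker τ (le_of_lt hτ)]
      _ = ∫⁻ τ in Set.Ioi (0:ℝ), ∫⁻ s in Set.Ioi τ, ENNReal.ofReal (g τ) * W s := by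
          apply setLIntegral_congr_fun measurableSet_Ioi
          exact fun τ _ => (lintegral_const_mul _ hWmeas).symm
      _ = ∫⁻ τ : ℝ, ∫⁻ s : ℝ, F τ s := by
          rw [← lintegral_indicator measurableSet_Ioi _]
          apply lintegral_congr
          intro τ
          by_cases hτ : τ ∈ Set.Ioi (0:ℝ)
          · rw [Set.indicator_of_mem hτ, ← lintegral_indicator measurableSet_Ioi _]
            apply lintegral_congr
            intro s
            have hτ' : 0 < τ := Set.mem_Ioi.1 hτ
            by_cases hs : τ < s <;>
              simp [Set.indicator_apply, hFdef, hSdef, Set.mem_setOf_eq, Set.mem_Ioi, hs, hτ']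
          · rw [Set.indicator_of_notMem hτ]
            have hz : ∀ s, F τ s = 0 := by
              intro s
              rw [hFdef]
              apply Set.indicator_of_notMem
              simp only [hSdef, Set.mem_setOf_eq]
              tauto
            simp [hz]
  have step2 : ∫⁻ τ : ℝ, ∫⁻ s : ℝ, F τ s = ∫⁻ s : ℝ, ∫⁻ τ : ℝ, F τ s :=
    lintegral_lintegral_swap hF.aemeasurable
  have step3 : ∫⁻ s : ℝ, ∫⁻ τ : ℝ, F τ s
      = ∫⁻ s in Set.Ioi (0:ℝ), ∫⁻ τ in Set.Ioo 0 s, ENNReal.ofReal (g τ) * W s := by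
    rw [← lintegral_indicator measurableSet_Ioi _]
    apply lintegral_congr
    intro s
    by_cases hs : 0 < s
    · rw [Set.indicator_of_mem (Set.mem_Ioi.2 hs), ← lintegral_indicator measurableSet_Ioo _]
      apply lintegral_congr
      intro τ
      by_cases hτ : 0 < τ ∧ τ < s <;>
        simp [Set.indicator_apply, hFdef, hSdef, Set.mem_setOf_eq, Set.mem_Ioo, hτ, hs]
    · rw [Set.indicator_of_notMem (by simpa using hs)]
      have hz : ∀ τ, F τ s = 0 := by
        intro τ
        rw [hFdef]
        apply Set.indicator_of_notMem
        simp only [hSdef, Set.mem_setOf_eq]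
        rintro ⟨h1, h2⟩
        exact hs (h1.trans h2)
      simp [hz]
  have step4 : ∫⁻ s in Set.Ioi (0:ℝ), ∫⁻ τ in Set.Ioo 0 s, ENNReal.ofReal (g τ) * W s
      ≤ ∫⁻ s in Set.Ioi (0:ℝ), ENNReal.ofReal (C*(1+s)) * W s := by
    apply lintegral_mono_ae
    filter_upwards [ae_restrict_mem measurableSet_Ioi] with s hs
    rw [lintegral_mul_const _ hg.ennreal_ofReal]
    refine mul_le_mul_left ?_ (W s)
    refine le_trans (lintegral_mono_set Set.Ioo_subset_Ioc_self) (hb s hs)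
  have step5 : ∫⁻ s in Set.Ioi (0:ℝ), ENNReal.ofReal (C*(1+s)) * W s
      = ENNReal.ofReal (C * (1/a + Real.pi/2)) := by
    have e1 : ∫⁻ s in Set.Ioi (0:ℝ), ENNReal.ofReal (C*(1+s)) * W s
        = ∫⁻ s in Set.Ioi (0:ℝ), ENNReal.ofReal (C*(1+s)*(2*a*s/(a^2+s^2)^2)) := by
      apply setLIntegral_congr_fun measurableSet_Ioi
      refine fun s hs => ?_
      have hs' : (0:ℝ) < s := hs
      beta_reduce
      rw [hW, ENNReal.ofReal_mul (by nlinarith [hC.le] : (0:ℝ) ≤ C*(1+s))]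
    rw [e1, ← ofReal_integral_eq_lintegral_ofReal (main_int C a hC.le ha) ?_,
      main_eq C a hC.le ha]
    filter_upwards [ae_restrict_mem measurableSet_Ioi] with s hs
    have hs' : (0:ℝ) < s := hs
    have h1 : (0:ℝ) ≤ 1 + s := by linarith
    have := denpos a ha s
    positivity
  rw [step1, step2, step3]
  exact step4.trans (le_of_eq step5)

theorem stmt_9 (C : ℝ) (hC : 0 < C) (g : ℝ → ℝ) (hmeas : Measurable g)
    (hnonneg : ∀ τ, 0 ≤ g τ)
    (hleft : ∀ T : ℝ, 0 < T → ∫ τ in (-T)..0, g τ ≤ C * (1 + T))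
    (hright : ∀ T : ℝ, 0 < T → ∫ τ in (0 : ℝ)..T, g τ ≤ C * (1 + T)) :
    ∀ T σ : ℝ, 1 ≤ T → 0 < σ →
      (∫ τ : ℝ, g τ * ((T + σ) / ((T + σ) ^ 2 + τ ^ 2))) ≤
          C * (2 / (T + σ) + Real.pi) ∧
        C * (2 / (T + σ) + Real.pi) ≤ 6 * C := by
  intro T σ hT hσ
  set a := T + σ with haDef
  have ha1 : 1 ≤ a := by simp only [haDef]; linarith
  have ha : 0 < a := by linarith
  have hpi := Real.pi_pos
  constructor
  · -- main bound
    have hKcont : Continuous fun τ : ℝ => a/(a^2+τ^2) :=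
      continuous_const.div (by continuity) (fun τ => (denpos a ha τ).ne')
    by_cases hInt : Integrable (fun τ => g τ * (a/(a^2+τ^2)))
    · have hloc : ∀ s : ℝ, 0 < s → IntegrableOn g (Set.Icc (-s) s) := by
        intro s hs
        have h1 : IntegrableOn (fun τ => (a^2+s^2)/a * (g τ * (a/(a^2+τ^2))))
            (Set.Icc (-s) s) := (hInt.const_mul _).integrableOn
        apply Integrable.mono h1 hmeas.aestronglyMeasurable.restrict
        filter_upwards [ae_restrict_mem measurableSet_Icc] with τ hτ
        have hτ2 : τ^2 ≤ s^2 := by nlinarith [hτ.1, hτ.2]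
        have hd := denpos a ha τ
        have key : 1 ≤ (a^2+s^2)/a * (a/(a^2+τ^2)) := by
          rw [div_mul_div_comm, le_div_iff₀ (by positivity)]
          nlinarith
        have h2 : g τ ≤ (a^2+s^2)/a * (g τ * (a/(a^2+τ^2))) := by
          calc g τ = g τ * 1 := (mul_one _).symm
            _ ≤ g τ * ((a^2+s^2)/a * (a/(a^2+τ^2))) :=
                mul_le_mul_of_nonneg_left key (hnonneg τ)
            _ = (a^2+s^2)/a * (g τ * (a/(a^2+τ^2))) := by ring
        rw [Real.norm_eq_abs, Real.norm_eq_abs, abs_of_nonneg (hnonneg τ)]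
        exact h2.trans (le_abs_self _)
      have hbR : ∀ s : ℝ, 0 < s →
          ∫⁻ τ in Set.Ioc 0 s, ENNReal.ofReal (g τ) ≤ ENNReal.ofReal (C*(1+s)) := by
        intro s hs
        have hint : IntegrableOn g (Set.Ioc 0 s) :=
          (hloc s hs).mono_set (Set.Ioc_subset_Icc_self.trans
            (Set.Icc_subset_Icc (by linarith) le_rfl))
        rw [← ofReal_integral_eq_lintegral_ofReal hint
          (ae_of_all _ fun τ => hnonneg τ)]
        apply ENNReal.ofReal_le_ofReal
        have := hright s hs
        rwa [intervalIntegral.integral_of_le hs.le] at this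
      have hbL : ∀ s : ℝ, 0 < s →
          ∫⁻ τ in Set.Ioc 0 s, ENNReal.ofReal (g (-τ)) ≤ ENNReal.ofReal (C*(1+s)) := by
        intro s hs
        have hmp := Measure.measurePreserving_neg (volume : Measure ℝ)
        have hpre : Neg.neg ⁻¹' (Set.Ico (-s) (0:ℝ)) = Set.Ioc 0 s := by
          ext x
          simp only [Set.mem_preimage, Set.mem_Ico, Set.mem_Ioc]
          constructor
          · rintro ⟨h1, h2⟩; constructor <;> linarith
          · rintro ⟨h1, h2⟩; constructor <;> linarith
        have e1 : ∫⁻ τ in Set.Ioc 0 s, ENNReal.ofReal (g (-τ))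
            = ∫⁻ x in Set.Ico (-s) 0, ENNReal.ofReal (g x) := by
          rw [← hpre, ← setLIntegral_map measurableSet_Ico hmeas.ennreal_ofReal
            measurable_neg, hmp.map_eq]
        have e2 : (volume : Measure ℝ).restrict (Set.Ico (-s) 0)
            = volume.restrict (Set.Ioc (-s) 0) := by
          rw [Measure.restrict_congr_set Ico_ae_eq_Icc,
            Measure.restrict_congr_set Ioc_ae_eq_Icc]
        have hint : IntegrableOn g (Set.Ioc (-s) 0) :=
          (hloc s hs).mono_set (Set.Ioc_subset_Icc_self.trans
            (Set.Icc_subset_Icc le_rfl (by linarith)))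
        rw [e1, e2, ← ofReal_integral_eq_lintegral_ofReal hint
          (ae_of_all _ fun τ => hnonneg τ)]
        apply ENNReal.ofReal_le_ofReal
        have := hleft s hs
        rwa [intervalIntegral.integral_of_le (by linarith : -s ≤ (0:ℝ))] at this
      have hfm : Measurable fun τ : ℝ => ENNReal.ofReal (g τ * (a/(a^2+τ^2))) :=
        (hmeas.mul hKcont.measurable).ennreal_ofReal
      have hL : ∫⁻ τ in Set.Iio (0:ℝ), ENNReal.ofReal (g τ * (a/(a^2+τ^2)))
          = ∫⁻ τ in Set.Ioi (0:ℝ), ENNReal.ofReal (g (-τ) * (a/(a^2+τ^2))) := by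
        have hmp := Measure.measurePreserving_neg (volume : Measure ℝ)
        have hpre : Neg.neg ⁻¹' (Set.Iio (0:ℝ)) = Set.Ioi 0 := by
          ext x; simp [neg_lt_zero]
        calc ∫⁻ τ in Set.Iio (0:ℝ), ENNReal.ofReal (g τ * (a/(a^2+τ^2)))
            = ∫⁻ x in Neg.neg ⁻¹' (Set.Iio (0:ℝ)),
                ENNReal.ofReal (g (-x) * (a/(a^2+(-x)^2))) := by
              rw [← setLIntegral_map measurableSet_Iio hfm measurable_neg, hmp.map_eq]
          _ = ∫⁻ x in Set.Ioi (0:ℝ), ENNReal.ofReal (g (-x) * (a/(a^2+x^2))) := by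
              rw [hpre]
              exact setLIntegral_congr_fun measurableSet_Ioi
                (fun x _ => by rw [neg_sq])
      have hhalfR := half C a hC ha g hmeas hnonneg hbR
      have hhalfL := half C a hC ha (fun τ => g (-τ)) (hmeas.comp measurable_neg)
        (fun τ => hnonneg _) hbL
      have htot : ∫⁻ τ : ℝ, ENNReal.ofReal (g τ * (a/(a^2+τ^2)))
          ≤ ENNReal.ofReal (C * (2/a + Real.pi)) := by
        have hsplit := (lintegral_add_compl
          (fun τ => ENNReal.ofReal (g τ * (a/(a^2+τ^2)))) (measurableSet_Iio (a := (0:ℝ))) (μ := volume)).symm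
        rw [Set.compl_Iio] at hsplit
        rw [hsplit, hL, Measure.restrict_congr_set (Ioi_ae_eq_Ici).symm]
        calc (∫⁻ τ in Set.Ioi (0:ℝ), ENNReal.ofReal (g (-τ) * (a/(a^2+τ^2))))
              + ∫⁻ τ in Set.Ioi (0:ℝ), ENNReal.ofReal (g τ * (a/(a^2+τ^2)))
            ≤ ENNReal.ofReal (C * (1/a + Real.pi/2)) + ENNReal.ofReal (C * (1/a + Real.pi/2)) :=
              add_le_add hhalfL hhalfR
          _ = ENNReal.ofReal (C * (2/a + Real.pi)) := by
              rw [← ENNReal.ofReal_add (by positivity) (by positivity)]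
              congr 1
              field_simp
              ring
      rw [integral_eq_lintegral_of_nonneg_ae
        (ae_of_all _ fun τ => mul_nonneg (hnonneg τ) (by positivity))
        (hmeas.mul hKcont.measurable).aestronglyMeasurable]
      calc (∫⁻ τ : ℝ, ENNReal.ofReal (g τ * (a/(a^2+τ^2)))).toReal
          ≤ (ENNReal.ofReal (C * (2/a + Real.pi))).toReal :=
            ENNReal.toReal_mono ENNReal.ofReal_ne_top htot
        _ = C * (2/a + Real.pi) := ENNReal.toReal_ofReal (by positivity)
    · rw [integral_undef hInt]
      positivity
  · have hpi4 := Real.pi_le_four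
    have h2a : 2 / a ≤ 2 := div_le_self (by norm_num) ha1
    nlinarith [hC.le]
end

section
/- If (a_n) is a sequence of complex numbers with Σ_n |a_n|²/d(n) < ∞, where d(n) is the number of divisors of n, and z = (z_j) ∈ ℓ² with each |z_j| < 1, then Σ_{n≥1} |a_n|·|z(n)| < ∞, where for n = p_1^{α_1}···p_k^{α_k} we set z(n) = z_1^{α_1}···z_k^{α_k}. -/
open Complex

open Finset in
set_option maxHeartbeats 1000000 in
private lemma aux_summable_g (x : ℕ → ℝ) (hx0 : ∀ p, 0 ≤ x p)
    (hx1 : ∀ p : ℕ, p.Prime → x p < 1)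
    (hxs : Summable fun p : Nat.Primes => x (p : ℕ)) :
    Summable fun n : ℕ =>
      (n.divisors.card : ℝ) * ∏ p ∈ n.primeFactors, x p ^ n.factorization p := by
  set g : ℕ → ℝ := fun n =>
    (n.divisors.card : ℝ) * ∏ p ∈ n.primeFactors, x p ^ n.factorization p with hgdef
  have hgw : ∀ n : ℕ, (∏ p ∈ n.primeFactors, x p ^ n.factorization p)
      = n.factorization.prod fun p k => x p ^ k := by
    intro n
    rw [Finsupp.prod, Nat.support_factorization]
  have hg0 : ∀ n, 0 ≤ g n := fun n =>
    mul_nonneg (by positivity) (Finset.prod_nonneg fun p _ => pow_nonneg (hx0 p) _)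
  have hg1 : g 1 = 1 := by simp [g]
  have hgzero : g 0 = 0 := by simp [g]
  have hgmul : ∀ {m n : ℕ}, Nat.Coprime m n → g (m * n) = g m * g n := by
    intro m n hmn
    rcases eq_or_ne m 0 with rfl | hm
    · have := (Nat.coprime_zero_left n).mp hmn; subst this; simp [g]
    rcases eq_or_ne n 0 with rfl | hn
    · have := (Nat.coprime_zero_right m).mp hmn; subst this; simp [g]
    simp only [g, hgw]
    rw [hmn.card_divisors_mul, Nat.factorization_mul hm hn,
      Finsupp.prod_add_index' (fun p => pow_zero (x p)) (fun p a b => pow_add (x p) a b)]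
    push_cast
    ring
  have hgpp : ∀ {p : ℕ}, p.Prime → ∀ k : ℕ, g (p ^ k) = ((k : ℝ) + 1) * x p ^ k := by
    intro p hp k
    rcases Nat.eq_zero_or_pos k with rfl | hk
    · simpa using hg1
    have hpk : (p : ℕ) ^ k ≠ 0 := pow_ne_zero _ hp.pos.ne'
    have hpf : (p ^ k).primeFactors = {p} := by
      rw [Nat.primeFactors_pow _ hk.ne', Nat.Prime.primeFactors hp]
    have hfac : (p ^ k).factorization p = k := by
      rw [hp.factorization_pow, Finsupp.single_eq_same]
    simp only [g]
    rw [Nat.card_divisors hpk, hpf, Finset.prod_singleton, Finset.prod_singleton, hfac]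
    push_cast
    ring
  -- summability at prime powers
  have hsumpp : ∀ {p : ℕ}, p.Prime → Summable fun k : ℕ => ((k : ℝ) + 1) * x p ^ k := by
    intro p hp
    have h1 : Summable fun k : ℕ => (k : ℝ) * x p ^ k := by
      simpa using summable_pow_mul_geometric_of_norm_lt_one 1
        (r := x p) (by rw [Real.norm_eq_abs, _root_.abs_of_nonneg (hx0 p)]; exact hx1 p hp)
    have h2 : Summable fun k : ℕ => x p ^ k :=
      summable_geometric_of_lt_one (hx0 p) (hx1 p hp)
    simpa [add_mul, one_mul] using h1.add h2
  have hsum : ∀ {p : ℕ}, p.Prime → Summable fun k : ℕ => ‖g (p ^ k)‖ := by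
    intro p hp
    refine (hsumpp hp).congr fun k => ?_
    rw [hgpp hp k, Real.norm_of_nonneg (mul_nonneg (by positivity) (pow_nonneg (hx0 p) _))]
  have hsumg : ∀ {p : ℕ}, p.Prime → Summable fun k : ℕ => g (p ^ k) :=
    fun {p} hp => (hsum hp).of_norm
  -- the "tail" of the local factor
  set t : ℕ → ℝ := fun p => ∑' k : ℕ, g (p ^ (k + 1)) with htdef
  have ht0 : ∀ p, 0 ≤ t p := fun p => tsum_nonneg fun k => hg0 _
  have hσ : ∀ {p : ℕ}, p.Prime → (∑' k : ℕ, g (p ^ k)) = 1 + t p := by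
    intro p hp
    rw [Summable.tsum_eq_zero_add (hsumg hp)]
    simp [hg1, t]
  -- a uniform comparison constant
  set C : ℝ := ∑' k : ℕ, ((k : ℝ) + 2) * (1 / 2) ^ k with hCdef
  have hCs : Summable fun k : ℕ => ((k : ℝ) + 2) * (1 / 2) ^ k := by
    have h1 : Summable fun k : ℕ => (k : ℝ) * (1 / 2) ^ k := by
      simpa using summable_pow_mul_geometric_of_norm_lt_one 1
        (r := (1 / 2 : ℝ)) (by rw [Real.norm_eq_abs, _root_.abs_of_nonneg (by norm_num : (0:ℝ) ≤ 1/2)]; norm_num)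
    have h2 : Summable fun k : ℕ => (2 : ℝ) * (1 / 2) ^ k :=
      (summable_geometric_of_lt_one (by norm_num) (by norm_num)).mul_left 2
    simpa [add_mul] using h1.add h2
  have hC0 : 0 ≤ C := tsum_nonneg fun k => by positivity
  -- bound on t for small primes
  have htle : ∀ {p : ℕ}, p.Prime → x p ≤ 1 / 2 → t p ≤ C * x p := by
    intro p hp hxp
    have hsl : Summable fun k : ℕ => g (p ^ (k + 1)) :=
      (summable_nat_add_iff 1).2 (hsumg hp)
    have hsr : Summable fun k : ℕ => ((k : ℝ) + 2) * (1 / 2) ^ k * x p := hCs.mul_right _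
    have hterm : ∀ k : ℕ, g (p ^ (k + 1)) ≤ ((k : ℝ) + 2) * (1 / 2) ^ k * x p := by
      intro k
      rw [hgpp hp (k + 1)]
      push_cast
      have hxk : x p ^ k ≤ (1 / 2 : ℝ) ^ k := pow_le_pow_left₀ (hx0 p) hxp k
      calc ((k : ℝ) + 1 + 1) * x p ^ (k + 1)
          = ((k : ℝ) + 2) * x p ^ k * x p := by ring
        _ ≤ ((k : ℝ) + 2) * (1 / 2) ^ k * x p := by
            have : ((k : ℝ) + 2) * x p ^ k ≤ ((k : ℝ) + 2) * (1 / 2) ^ k :=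
              mul_le_mul_of_nonneg_left hxk (by positivity)
            exact mul_le_mul_of_nonneg_right this (hx0 p)
    calc t p ≤ ∑' k : ℕ, ((k : ℝ) + 2) * (1 / 2) ^ k * x p :=
          Summable.tsum_le_tsum hterm hsl hsr
      _ = C * x p := by rw [tsum_mul_right]
  -- summability of t over primes
  have hB : {q : Nat.Primes | 1 / 2 < x (q : ℕ)}.Finite := by
    have h := hxs.tendsto_cofinite_zero.eventually_lt_const (show (0:ℝ) < 1 / 2 by norm_num)
    refine (Filter.eventually_cofinite.mp h).subset ?_
    intro q hq
    exact not_lt_of_gt hq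
  classical
  have hts : Summable fun q : Nat.Primes => t (q : ℕ) := by
    refine Summable.of_nonneg_of_le (fun q => ht0 _)
      (f := fun q : Nat.Primes => C * x (q : ℕ) + if q ∈ hB.toFinset then t (q : ℕ) else 0)
      (fun q => ?_) ?_
    · show t (q : ℕ) ≤ C * x (q : ℕ) + if q ∈ hB.toFinset then t (q : ℕ) else 0
      by_cases hq : q ∈ hB.toFinset
      · rw [if_pos hq]
        exact le_add_of_nonneg_left (mul_nonneg hC0 (hx0 _))
      · rw [if_neg hq, add_zero]

        have hxq : x (q : ℕ) ≤ 1 / 2 := by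
          have := hq
          rw [Set.Finite.mem_toFinset] at this
          exact le_of_not_gt this
        exact htle q.2 hxq
    · exact (hxs.mul_left C).add (summable_of_ne_finset_zero fun q hq => if_neg hq)
  set T : ℝ := ∑' q : Nat.Primes, t (q : ℕ) with hTdef
  -- partial sums are bounded by exp T
  refine summable_of_sum_le (fun n => hg0 n) (fun u => ?_) (c := Real.exp T)
  set s : Finset ℕ := u.biUnion Nat.primeFactors with hsdef
  have hmem : ∀ n ∈ u, g n ≠ 0 → n ∈ Nat.factoredNumbers s := by
    intro n hn hgn
    have hn0 : n ≠ 0 := by rintro rfl; exact hgn hgzero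
    refine ⟨hn0, fun p hp => ?_⟩
    have hp' : p ∈ n.primeFactors := List.mem_toFinset.mpr hp
    exact Finset.mem_biUnion.mpr ⟨n, hn, hp'⟩
  have hHS := (EulerProduct.summable_and_hasSum_factoredNumbers_prod_filter_prime_tsum
    hg1 hgmul (fun {p} hp => hsum hp) s).2
  have step1 : ∑ n ∈ u, g n ≤ ∏ p ∈ s with p.Prime, ∑' k : ℕ, g (p ^ k) := by
    rw [← Finset.sum_filter_of_ne hmem]
    rw [show (∑ n ∈ u.filter (· ∈ Nat.factoredNumbers s), g n)
        = ∑ m ∈ u.subtype (· ∈ Nat.factoredNumbers s), g (m : ℕ) from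
      (Finset.sum_subtype_eq_sum_filter g (p := (· ∈ Nat.factoredNumbers s))).symm]
    exact sum_le_hasSum _ (fun m _ => hg0 _) hHS
  have step2 : (∏ p ∈ s with p.Prime, ∑' k : ℕ, g (p ^ k)) ≤ Real.exp T := by
    have hprle : (∏ p ∈ s with p.Prime, ∑' k : ℕ, g (p ^ k))
        ≤ ∏ p ∈ s with p.Prime, Real.exp (t p) := by
      refine Finset.prod_le_prod (fun p hp => tsum_nonneg fun k => hg0 _) (fun p hp => ?_)
      have hpp : p.Prime := (Finset.mem_filter.mp hp).2
      rw [hσ hpp, add_comm]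
      exact Real.add_one_le_exp (t p)
    refine hprle.trans ?_
    rw [← Real.exp_sum]
    refine Real.exp_le_exp.mpr ?_
    rw [show (∑ p ∈ s.filter Nat.Prime, t p)
        = ∑ q ∈ s.subtype Nat.Prime, t (q : ℕ) from
      (Finset.sum_subtype_eq_sum_filter t (p := Nat.Prime)).symm]
    exact Summable.sum_le_tsum (ι := Nat.Primes) _ (fun q _ => ht0 _) hts
  exact step1.trans step2

theorem stmt_10 (a : ℕ → ℂ) (z : ℕ → ℂ)
    (hz1 : ∀ p : ℕ, p.Prime → ‖z p‖ < 1)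
    (hz2 : Summable fun p : Nat.Primes => ‖z (p : ℕ)‖ ^ 2)
    (ha : Summable fun n : ℕ =>
      ‖a n‖ ^ 2 / (n.divisors.card : ℝ)) :
    Summable fun n : ℕ =>
      ‖a n‖ *
        ‖∏ p ∈ n.primeFactors, z p ^ n.factorization p‖ := by
  set x : ℕ → ℝ := fun p => ‖z p‖ ^ 2 with hxdef
  have hg : Summable fun n : ℕ =>
      (n.divisors.card : ℝ) * ∏ p ∈ n.primeFactors, x p ^ n.factorization p := by
    refine aux_summable_g x (fun p => by positivity)
      (fun p hp => ?_) hz2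
    exact pow_lt_one₀ (norm_nonneg _) (hz1 p hp) two_ne_zero
  apply (summable_nat_add_iff 1).mp
  refine Summable.of_nonneg_of_le
    (fun n => mul_nonneg (norm_nonneg _) (norm_nonneg _))
    (fun n => ?_)
    ((((summable_nat_add_iff 1).2 ha).add ((summable_nat_add_iff 1).2 hg)).div_const 2)
  set m : ℕ := n + 1 with hmdef
  have hm : m ≠ 0 := Nat.succ_ne_zero n
  set A : ℝ := ‖a m‖ with hAdef
  set B : ℝ := ‖∏ p ∈ m.primeFactors, z p ^ m.factorization p‖ with hBdef
  set D : ℝ := (m.divisors.card : ℝ) with hDdef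
  have hD : 0 < D := by
    have h : 0 < m.divisors.card :=
      Finset.card_pos.mpr ⟨1, Nat.one_mem_divisors.mpr hm⟩
    rw [hDdef]
    exact_mod_cast h
  have hB2 : B ^ 2 = ∏ p ∈ m.primeFactors, x p ^ m.factorization p := by
    rw [hBdef, norm_prod]
    rw [← Finset.prod_pow]
    refine Finset.prod_congr rfl fun p hp => ?_
    rw [norm_pow, ← pow_mul, ← pow_mul, mul_comm]
  have key : A * B ≤ (A ^ 2 / D + D * B ^ 2) / 2 := by
    rw [le_div_iff₀ (by norm_num : (0:ℝ) < 2), ← sub_nonneg]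
    have hid : A ^ 2 / D + D * B ^ 2 - A * B * 2 = (A - D * B) ^ 2 / D := by
      field_simp
      ring
    rw [hid]
    exact div_nonneg (sq_nonneg _) hD.le
  calc A * B ≤ (A ^ 2 / D + D * B ^ 2) / 2 := key
    _ = (A ^ 2 / D + D * (∏ p ∈ m.primeFactors, x p ^ m.factorization p)) / 2 := by
        rw [hB2]
end
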